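/- arXiv:1701.02083 — 6 statements merged into one kernel-verified Lean document; each statement's English description precedes it below -/
import Mathlib

section
/- Let X and Y be topological spaces and suppose X dominates Y, i.e., there exist continuous maps f : X → Y and g : Y → X such that f ∘ g is homotopic to the identity of Y. Then TC(Y) ≤ TC(X). -/
open unitInterval

/-- A continuous motion-planning section of the path fibration `π : PX → X × X`,
`π γ = (γ 0, γ 1)`, over a subset `U ⊆ X × X`. -/
def HasMotionPlanner {X : Type*} [TopologicalSpace X] (U : Set (X × X)) : Prop :=
  ∃ s : C(U, C(unitInterval, X)), ∀ p : U, s p 0 = (p : X × X).1 ∧ s p 1 = (p : X × X).2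

/-- The topological complexity of a space `X`: the minimal number `k` such that `X × X`
can be covered by `k` open subsets, each admitting a continuous section of the path
fibration; `⊤` (infinity) if no such `k` exists. -/
noncomputable def topologicalComplexity (X : Type*) [TopologicalSpace X] : ℕ∞ :=
  sInf {c : ℕ∞ | ∃ k : ℕ, c = k ∧ ∃ U : Fin k → Set (X × X),
    (∀ i, IsOpen (U i)) ∧ (⋃ i, U i) = Set.univ ∧ ∀ i, HasMotionPlanner (U i)}

theorem TC_le_of_domination {X Y : Type*} [TopologicalSpace X] [TopologicalSpace Y]
    [PathConnectedSpace X] [PathConnectedSpace Y] (f : C(X, Y)) (g : C(Y, X))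
    (h : (f.comp g).Homotopic (ContinuousMap.id Y)) :
    topologicalComplexity Y ≤ topologicalComplexity X := by
  obtain ⟨H⟩ := h
  apply sInf_le_sInf
  rintro c ⟨k, rfl, U, hopen, hcover, hmp⟩
  have hgg : Continuous (Prod.map g g) := g.continuous.prodMap g.continuous
  refine ⟨k, rfl, fun i => Prod.map g g ⁻¹' U i, fun i => (hopen i).preimage hgg, ?_, ?_⟩
  · ext q
    simp only [Set.mem_iUnion, Set.mem_preimage, Set.mem_univ, iff_true]
    have : Prod.map g g q ∈ ⋃ i, U i := hcover ▸ Set.mem_univ _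
    simpa using this
  · intro i
    obtain ⟨s, hs⟩ := hmp i
    set V : Set (Y × Y) := Prod.map g g ⁻¹' U i with hV
    let φ : V → U i := fun q => ⟨Prod.map g g (q : Y × Y), q.2⟩
    have hφ : Continuous φ := (hgg.comp continuous_subtype_val).subtype_mk _
    -- family of paths from f (g y) to y, coming from the homotopy H
    let hy : ∀ y : Y, Path (f (g y)) y := fun y =>
      { toFun := fun t => H (t, y)
        continuous_toFun := H.continuous.comp (continuous_id.prodMk continuous_const)
        source' := by simp
        target' := by simp }
    have hhy : Continuous ↿hy := by
      show Continuous fun p : Y × I => H (p.2, p.1)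
      exact H.continuous.comp (continuous_snd.prodMk continuous_fst)
    let γ₁ : ∀ q : V, Path (q : Y × Y).1 (f (g (q : Y × Y).1)) := fun q => (hy (q : Y × Y).1).symm
    have h₁ : Continuous ↿γ₁ := by
      apply Path.symm_continuous_family
      exact hhy.comp ((continuous_fst.comp (continuous_subtype_val.comp continuous_fst)).prodMk
        continuous_snd)
    let γ₂ : ∀ q : V, Path (f (g (q : Y × Y).1)) (f (g (q : Y × Y).2)) := fun q =>
      { toFun := fun t => f (s (φ q) t)
        continuous_toFun := f.continuous.comp (s (φ q)).continuous
        source' := by show f (s (φ q) 0) = _; rw [(hs (φ q)).1]; rfl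
        target' := by show f (s (φ q) 1) = _; rw [(hs (φ q)).2]; rfl }
    have h₂ : Continuous ↿γ₂ := by
      show Continuous fun p : V × I => f (s (φ p.1) p.2)
      exact f.continuous.comp <| ContinuousEval.continuous_eval.comp
        (((s.continuous.comp hφ).comp continuous_fst).prodMk continuous_snd)
    let γ₃ : ∀ q : V, Path (f (g (q : Y × Y).2)) (q : Y × Y).2 := fun q => hy (q : Y × Y).2
    have h₃ : Continuous ↿γ₃ :=
      hhy.comp ((continuous_snd.comp (continuous_subtype_val.comp continuous_fst)).prodMk
        continuous_snd)
    let Γ : ∀ q : V, Path (q : Y × Y).1 (q : Y × Y).2 := fun q =>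
      (γ₁ q).trans ((γ₂ q).trans (γ₃ q))
    have hΓ : Continuous ↿Γ :=
      Path.trans_continuous_family _ h₁ _ (Path.trans_continuous_family _ h₂ _ h₃)
    refine ⟨⟨fun q => (Γ q).toContinuousMap, ?_⟩, fun q => ⟨(Γ q).source, (Γ q).target⟩⟩
    exact ContinuousMap.continuous_of_continuous_uncurry _ hΓ
end

section
/- If X and Y are homotopy equivalent path-connected topological spaces, then TC(X) = TC(Y). -/
open unitInterval

lemma hasMotionPlanner_pullback {X Y : Type*} [TopologicalSpace X] [TopologicalSpace Y]
    (f : C(X, Y)) (g : C(Y, X)) (H : (g.comp f).Homotopy (ContinuousMap.id X))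
    (V : Set (Y × Y)) (hV : HasMotionPlanner V) :
    HasMotionPlanner (Prod.map f f ⁻¹' V) := by
  obtain ⟨s, hs⟩ := hV
  set U : Set (X × X) := Prod.map f f ⁻¹' V with hU
  have hq : Continuous (fun p : U => (⟨(f (p : X × X).1, f (p : X × X).2), p.2⟩ : V)) := by
    apply Continuous.subtype_mk
    exact (f.continuous.comp (continuous_fst.comp continuous_subtype_val)).prodMk
      (f.continuous.comp (continuous_snd.comp continuous_subtype_val))
  set q : U → V := fun p => ⟨(f (p : X × X).1, f (p : X × X).2), p.2⟩ with hqdef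
  let pr : ℝ → unitInterval := Set.projIcc 0 1 zero_le_one
  have hpr : Continuous pr := continuous_projIcc
  set F : U × unitInterval → X := fun z =>
    if ((z.2 : ℝ)) ≤ 1/3 then H (pr (1 - 3 * (z.2 : ℝ)), (z.1 : X × X).1)
    else if ((z.2 : ℝ)) ≤ 2/3 then g (s (q z.1) (pr (3 * (z.2 : ℝ) - 1)))
    else H (pr (3 * (z.2 : ℝ) - 2), (z.1 : X × X).2) with hF
  have ht2 : Continuous fun z : U × unitInterval => ((z.2 : ℝ)) :=
    continuous_subtype_val.comp continuous_snd
  have hr1 : Continuous fun z : U × unitInterval => (1 : ℝ) - 3 * (z.2 : ℝ) :=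
    continuous_const.sub (continuous_const.mul ht2)
  have hr2 : Continuous fun z : U × unitInterval => 3 * (z.2 : ℝ) - 1 :=
    (continuous_const.mul ht2).sub continuous_const
  have hr3 : Continuous fun z : U × unitInterval => 3 * (z.2 : ℝ) - 2 :=
    (continuous_const.mul ht2).sub continuous_const
  have hc1 : Continuous fun z : U × unitInterval =>
      H (pr (1 - 3 * (z.2 : ℝ)), (z.1 : X × X).1) := by
    apply H.continuous.comp
    exact (hpr.comp hr1).prodMk
      (continuous_fst.comp (continuous_subtype_val.comp continuous_fst))
  have hc2 : Continuous fun z : U × unitInterval =>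
      g (s (q z.1) (pr (3 * (z.2 : ℝ) - 1))) := by
    apply g.continuous.comp
    exact (s.continuous.comp (hq.comp continuous_fst)).eval (hpr.comp hr2)
  have hc3 : Continuous fun z : U × unitInterval =>
      H (pr (3 * (z.2 : ℝ) - 2), (z.1 : X × X).2) := by
    apply H.continuous.comp
    exact (hpr.comp hr3).prodMk
      (continuous_snd.comp (continuous_subtype_val.comp continuous_fst))
  have hpr0 : pr 0 = 0 := by
    simp [pr, Set.projIcc]
  have hpr1 : pr 1 = 1 := by
    simp [pr, Set.projIcc]
  have hFc : Continuous F := by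
    rw [hF]
    apply Continuous.if_le _ _ ht2 continuous_const
    · intro z hz
      rw [hz]
      have h23 : (1:ℝ)/3 ≤ 2/3 := by norm_num
      rw [if_pos h23]
      have e1 : (1 : ℝ) - 3 * (1/3 : ℝ) = 0 := by norm_num
      have e2 : (3 : ℝ) * (1/3 : ℝ) - 1 = 0 := by norm_num
      rw [e1, e2, hpr0, H.apply_zero]
      simp [q, (hs (q z.1)).1, hqdef]
    · exact hc1
    · apply Continuous.if_le _ _ ht2 continuous_const
      · intro z hz
        rw [hz]
        have e1 : (3 : ℝ) * (2/3 : ℝ) - 1 = 1 := by norm_num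
        have e2 : (3 : ℝ) * (2/3 : ℝ) - 2 = 0 := by norm_num
        rw [e1, e2, hpr0, hpr1, H.apply_zero]
        simp [q, (hs (q z.1)).2, hqdef]
      · exact hc2
      · exact hc3
  refine ⟨(ContinuousMap.mk F hFc).curry, fun p => ?_⟩
  constructor
  · show F (p, 0) = _
    rw [hF]
    have h0 : ((0 : unitInterval) : ℝ) ≤ 1/3 := by norm_num
    simp only [h0, if_pos]
    have : (1 : ℝ) - 3 * ((0 : unitInterval) : ℝ) = 1 := by norm_num
    rw [this, hpr1, H.apply_one]
    rfl
  · show F (p, 1) = _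
    rw [hF]
    have h1 : ¬ ((1 : unitInterval) : ℝ) ≤ 1/3 := by norm_num
    have h2 : ¬ ((1 : unitInterval) : ℝ) ≤ 2/3 := by norm_num
    simp only [if_neg h1, if_neg h2]
    have : (3 : ℝ) * ((1 : unitInterval) : ℝ) - 2 = 1 := by norm_num
    rw [this, hpr1, H.apply_one]
    rfl

lemma TC_le {X Y : Type*} [TopologicalSpace X] [TopologicalSpace Y]
    (h : ContinuousMap.HomotopyEquiv X Y) :
    topologicalComplexity X ≤ topologicalComplexity Y := by
  apply sInf_le_sInf
  rintro c ⟨k, rfl, V, hVo, hVcov, hVmp⟩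
  obtain ⟨H⟩ := h.left_inv
  refine ⟨k, rfl, fun i => Prod.map h.toFun h.toFun ⁻¹' V i, ?_, ?_, ?_⟩
  · intro i
    exact (hVo i).preimage ((h.toFun.continuous.prodMap h.toFun.continuous))
  · rw [← Set.preimage_iUnion, hVcov, Set.preimage_univ]
  · intro i
    exact hasMotionPlanner_pullback h.toFun h.invFun H (V i) (hVmp i)

/-- Farber: topological complexity is a homotopy invariant. -/
theorem TC_homotopy_invariant {X Y : Type*} [TopologicalSpace X] [TopologicalSpace Y]
    [PathConnectedSpace X] [PathConnectedSpace Y] (h : ContinuousMap.HomotopyEquiv X Y) :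
    topologicalComplexity X = topologicalComplexity Y :=
  le_antisymm (TC_le h) (TC_le h.symm)
end

section
/- For path-connected metric spaces X and Y one has TC(X × Y) ≤ TC(X) + TC(Y) − 1. -/
open unitInterval

namespace TCAux
open Finset
set_option linter.unusedSectionVars false

attribute [local instance] Classical.propDecidable

variable (n m : ℕ) (a b : ℕ → ℝ)

/-- candidate set for the `r`-th order statistic of the merge -/
def Dset (r : ℕ) : Finset ℕ :=
  insert (min r n) ((Finset.range (r + 1)).filter fun x => x ≤ n ∧ r - x ≤ m)

lemma Dset_nonempty (r : ℕ) : (Dset n m r).Nonempty :=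
  ⟨min r n, Finset.mem_insert_self _ _⟩

/-- the `r`-th smallest element of the merged multiset of partial sums -/
noncomputable def cval (r : ℕ) : ℝ :=
  (Dset n m r).inf' (Dset_nonempty n m r) fun x => max (a x) (b (r - x))

lemma mem_Dset {r x : ℕ} (hr : r ≤ n + m) :
    x ∈ Dset n m r ↔ x ≤ r ∧ x ≤ n ∧ r - x ≤ m := by
  constructor
  · intro hx
    rcases Finset.mem_insert.1 hx with h | h
    · subst h
      refine ⟨Nat.min_le_left _ _, Nat.min_le_right _ _, ?_⟩
      rcases le_total r n with h' | h'
      · simp [Nat.min_eq_left h']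
      · rw [Nat.min_eq_right h']
        omega
    · rcases Finset.mem_filter.1 h with ⟨h1, h2, h3⟩
      exact ⟨Nat.lt_succ_iff.1 (Finset.mem_range.1 h1), h2, h3⟩
  · rintro ⟨h1, h2, h3⟩
    exact Finset.mem_insert_of_mem (Finset.mem_filter.2
      ⟨Finset.mem_range.2 (Nat.lt_succ_of_le h1), h2, h3⟩)

lemma cval_le {r x : ℕ} (hr : r ≤ n + m) (h1 : x ≤ r) (h2 : x ≤ n) (h3 : r - x ≤ m) :
    cval n m a b r ≤ max (a x) (b (r - x)) :=
  Finset.inf'_le _ ((mem_Dset n m hr).2 ⟨h1, h2, h3⟩)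

lemma le_cval {r : ℕ} {v : ℝ} (hr : r ≤ n + m)
    (H : ∀ x, x ≤ r → x ≤ n → r - x ≤ m → v ≤ max (a x) (b (r - x))) :
    v ≤ cval n m a b r := by
  refine Finset.le_inf' _ _ fun x hx => ?_
  rcases (mem_Dset n m hr).1 hx with ⟨h1, h2, h3⟩
  exact H x h1 h2 h3


section
variable (hma : Monotone a) (hmb : Monotone b)
  (ha0 : a 0 = 0) (hb0 : b 0 = 0) (han : a n = 1) (hbm : b m = 1)

include hma ha0 in
lemma a_nonneg (x : ℕ) : 0 ≤ a x := ha0 ▸ hma (Nat.zero_le x)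

include hma hmb ha0 hb0 in
lemma cval_nonneg {r : ℕ} (hr : r ≤ n + m) : 0 ≤ cval n m a b r := by
  refine le_cval n m a b hr fun x h1 h2 h3 => ?_
  exact le_trans (a_nonneg a hma ha0 x) (le_max_left _ _)

include hma hmb ha0 hb0 in
lemma cval_zero : cval n m a b 0 = 0 := by
  have h1 : cval n m a b 0 ≤ max (a 0) (b 0) :=
    cval_le n m a b (Nat.zero_le _) le_rfl (Nat.zero_le _) (by simp)
  have h2 : 0 ≤ cval n m a b 0 := cval_nonneg n m a b hma hmb ha0 hb0 (Nat.zero_le _)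
  rw [ha0, hb0] at h1
  simp only [max_self] at h1
  exact le_antisymm h1 h2

include hma hmb han hbm in
lemma cval_le_one {r : ℕ} (hr : r ≤ n + m) : cval n m a b r ≤ 1 := by
  have h1 : min r n ≤ r := Nat.min_le_left _ _
  have h2 : min r n ≤ n := Nat.min_le_right _ _
  have h3 : r - min r n ≤ m := by omega
  refine le_trans (cval_le n m a b hr h1 h2 h3) ?_
  exact max_le (han ▸ hma h2) (hbm ▸ hmb h3)

include hma hmb in
lemma cval_succ_mono {r : ℕ} (hr : r + 1 ≤ n + m) : cval n m a b r ≤ cval n m a b (r + 1) := by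
  refine le_cval n m a b (by omega) fun x h1 h2 h3 => ?_
  rcases Nat.eq_zero_or_pos x with hx | hx
  · subst hx
    have h3' : r - 0 ≤ m := by omega
    refine le_trans (cval_le n m a b (by omega) (Nat.zero_le _) (Nat.zero_le _) h3') ?_
    exact max_le_max le_rfl (hmb (by omega))
  · have h1' : x - 1 ≤ r := by omega
    have h2' : x - 1 ≤ n := by omega
    have h3' : r - (x - 1) ≤ m := by omega
    refine le_trans (cval_le n m a b (by omega) h1' h2' h3') ?_
    refine max_le_max (hma (by omega)) (le_of_eq ?_)
    congr 1
    omega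

include hma hmb in
lemma cval_mono {r r' : ℕ} (h : r ≤ r') (hr' : r' ≤ n + m) :
    cval n m a b r ≤ cval n m a b r' := by
  induction r' with
  | zero => simp [Nat.le_zero.1 h]
  | succ k ih =>
    rcases Nat.lt_succ_iff_lt_or_eq.1 (Nat.lt_succ_of_le h) with h' | h'
    · exact le_trans (ih (by omega) (by omega)) (cval_succ_mono n m a b hma hmb hr')
    · exact le_of_eq (by rw [h'])

include hma hmb han hbm in
lemma cval_top (hn : 1 ≤ n) (hm : 1 ≤ m) : cval n m a b (n + m - 1) = 1 := by
  refine le_antisymm (cval_le_one n m a b hma hmb han hbm (by omega)) ?_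
  refine le_cval n m a b (by omega) fun x h1 h2 h3 => ?_
  rcases Nat.lt_or_ge x n with hx | hx
  · have : n + m - 1 - x = m := by omega
    rw [this, hbm]
    exact le_max_right _ _
  · have hx' : x = n := by omega
    rw [hx', han]
    exact le_max_left _ _

end

/-- prefix property of a filter of a monotone sequence under a down-closed predicate -/
lemma filter_prefix {w : ℕ → ℝ} (hw : Monotone w) (N : ℕ) (P : ℝ → Prop)
    (hP : ∀ x y : ℝ, y ≤ x → P x → P y) {i : ℕ} :
    i ∈ (Finset.Icc 1 N).filter (fun j => P (w j)) ↔
      1 ≤ i ∧ i ≤ ((Finset.Icc 1 N).filter (fun j => P (w j))).card := by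
  set S := (Finset.Icc 1 N).filter (fun j => P (w j)) with hS
  constructor
  · intro hi
    rcases Finset.mem_filter.1 hi with ⟨hi1, hi2⟩
    rcases Finset.mem_Icc.1 hi1 with ⟨hi3, hi4⟩
    refine ⟨hi3, ?_⟩
    have hsub : Finset.Icc 1 i ⊆ S := by
      intro j hj
      rcases Finset.mem_Icc.1 hj with ⟨hj1, hj2⟩
      exact Finset.mem_filter.2 ⟨Finset.mem_Icc.2 ⟨hj1, le_trans hj2 hi4⟩,
        hP _ _ (hw hj2) hi2⟩
    calc i = (Finset.Icc 1 i).card := by simp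
    _ ≤ S.card := Finset.card_le_card hsub
  · rintro ⟨hi1, hi2⟩
    by_contra hmem
    have hsub : S ⊆ Finset.Icc 1 (i - 1) := by
      intro j hj
      rcases Finset.mem_filter.1 hj with ⟨hj1, hj2⟩
      rcases Finset.mem_Icc.1 hj1 with ⟨hj3, hj4⟩
      refine Finset.mem_Icc.2 ⟨hj3, ?_⟩
      by_contra hji
      have hij : i ≤ j := by omega
      exact hmem (Finset.mem_filter.2 ⟨Finset.mem_Icc.2 ⟨hi1, le_trans hij hj4⟩,
        hP _ _ (hw hij) hj2⟩)
    have := Finset.card_le_card hsub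
    simp only [Nat.card_Icc] at this
    omega

section
variable (hma : Monotone a) (hmb : Monotone b)
  (ha0 : a 0 = 0) (hb0 : b 0 = 0) (han : a n = 1) (hbm : b m = 1)

include hma hmb ha0 hb0 in
lemma exists_rank {a0 : ℕ} (h1 : 1 ≤ a0) (h2 : a0 ≤ n) :
    ∃ r, 1 ≤ r ∧ r ≤ n + m ∧ cval n m a b r = a a0 := by
  have hPa : ∀ x y : ℝ, y ≤ x → x < a a0 → y < a a0 :=
    fun x y hxy hx => lt_of_le_of_lt hxy hx
  have ha1lt : ((Finset.Icc 1 n).filter (fun j => a j < a a0)).card < a0 := by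
    have hsub : (Finset.Icc 1 n).filter (fun j => a j < a a0) ⊆ Finset.Icc 1 (a0 - 1) := by
      intro j hj
      rcases Finset.mem_filter.1 hj with ⟨hj1, hj2⟩
      rcases Finset.mem_Icc.1 hj1 with ⟨hj3, hj4⟩
      refine Finset.mem_Icc.2 ⟨hj3, ?_⟩
      by_contra hji
      exact absurd (hma (show a0 ≤ j by omega)) (not_le.2 hj2)
    have := Finset.card_le_card hsub
    simp only [Nat.card_Icc] at this
    omega
  have hb1le : ((Finset.Icc 1 m).filter (fun j => b j < a a0)).card ≤ m := by
    have := Finset.card_le_card (Finset.filter_subset (fun j => b j < a a0) (Finset.Icc 1 m))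
    simp only [Nat.card_Icc] at this
    omega
  set a1 := ((Finset.Icc 1 n).filter (fun j => a j < a a0)).card with ha1
  set b1 := ((Finset.Icc 1 m).filter (fun j => b j < a a0)).card with hb1
  refine ⟨a1 + b1 + 1, by omega, by omega, le_antisymm ?_ ?_⟩
  · have hc := cval_le n m a b (show a1+b1+1 ≤ n+m by omega)
      (show a1+1 ≤ a1+b1+1 by omega) (show a1+1 ≤ n by omega)
      (show a1+b1+1-(a1+1) ≤ m by omega)
    have hb1' : a1 + b1 + 1 - (a1 + 1) = b1 := by omega
    rw [hb1'] at hc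
    refine le_trans hc (max_le ?_ ?_)
    · exact hma (show a1 + 1 ≤ a0 by omega)
    · rcases Nat.eq_zero_or_pos b1 with h | h
      · rw [h, hb0]
        exact a_nonneg a hma ha0 a0
      · have hmem : b1 ∈ (Finset.Icc 1 m).filter (fun j => b j < a a0) :=
          (filter_prefix hmb m (fun x => x < a a0) hPa).2 ⟨h, by omega⟩
        exact le_of_lt (Finset.mem_filter.1 hmem).2
  · refine le_cval n m a b (by omega) fun x hx1 hx2 hx3 => ?_
    rcases Nat.lt_or_ge a1 x with hx | hx
    · refine le_trans ?_ (le_max_left _ _)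
      by_contra hlt
      have hmem : x ∈ (Finset.Icc 1 n).filter (fun j => a j < a a0) :=
        Finset.mem_filter.2 ⟨Finset.mem_Icc.2 ⟨by omega, hx2⟩, not_le.1 hlt⟩
      have h5 := ((filter_prefix hma n (fun t => t < a a0) hPa).1 hmem).2
      omega
    · refine le_trans ?_ (le_max_right _ _)
      by_contra hlt
      have hmem : a1 + b1 + 1 - x ∈ (Finset.Icc 1 m).filter (fun j => b j < a a0) :=
        Finset.mem_filter.2 ⟨Finset.mem_Icc.2 ⟨by omega, by omega⟩, not_le.1 hlt⟩
      have h5 := ((filter_prefix hmb m (fun t => t < a a0) hPa).1 hmem).2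
      omega

include hma hmb ha0 hb0 in
lemma cval_gap {p a0 : ℕ} (hp : p + 1 ≤ n + m) (h1 : 1 ≤ a0) (h2 : a0 ≤ n)
    (h : cval n m a b p < a a0) : cval n m a b (p + 1) ≤ a a0 := by
  obtain ⟨r, hr1, hr2, hr3⟩ := exists_rank n m a b hma hmb ha0 hb0 h1 h2
  have hpr : p < r := by
    by_contra hpr
    have := cval_mono n m a b hma hmb (show r ≤ p by omega) (by omega)
    rw [hr3] at this
    exact absurd h (not_lt.2 this)
  calc cval n m a b (p+1) ≤ cval n m a b r := cval_mono n m a b hma hmb (by omega) hr2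
  _ = a a0 := hr3

lemma cval_comm {r : ℕ} (hr : r ≤ n + m) : cval n m a b r = cval m n b a r := by
  have key : ∀ (n m : ℕ) (a b : ℕ → ℝ), r ≤ n + m →
      cval m n b a r ≤ cval n m a b r := by
    intro n m a b hr
    refine le_cval n m a b hr fun x h1 h2 h3 => ?_
    have hle := cval_le m n b a (by omega) (show r - x ≤ r by omega) h3
      (show r - (r - x) ≤ n by omega)
    rw [show r - (r - x) = x by omega] at hle
    exact le_trans hle (le_of_eq (max_comm _ _))
  exact le_antisymm (key m n b a (by omega)) (key n m a b hr)

end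


section
variable (hma : Monotone a) (hmb : Monotone b)
  (ha0 : a 0 = 0) (hb0 : b 0 = 0) (han : a n = 1) (hbm : b m = 1)

/-- the number of a-partial sums that lie at or below the `p`-th order statistic -/
noncomputable def kcount (p : ℕ) : ℕ :=
  ((Finset.Icc 1 n).filter fun x => a x ≤ cval n m a b p).card

include hma hmb ha0 hb0 in
lemma count_mem_iff {p : ℕ} (hp : p + 1 ≤ n + m) (hW : cval n m a b p < cval n m a b (p + 1))
    {x : ℕ} (h1 : 1 ≤ x) (h2 : x ≤ n) :
    (a x ≤ cval n m a b p ↔ a x < cval n m a b (p + 1)) := by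
  constructor
  · intro h
    exact lt_of_le_of_lt h hW
  · intro h
    by_contra hc
    exact absurd h (not_lt.2 (cval_gap n m a b hma hmb ha0 hb0 hp h1 h2 (not_le.1 hc)))

include hma hmb ha0 hb0 han hbm in
lemma kcount_lt (hn : 1 ≤ n) {p : ℕ} (hp : p + 1 ≤ n + m)
    (hW : cval n m a b p < cval n m a b (p + 1)) : kcount n m a b p < n := by
  by_contra hc
  have hcard : ((Finset.Icc 1 n).filter fun x => a x ≤ cval n m a b p).card = n := by
    have hle := Finset.card_le_card
      (Finset.filter_subset (fun x => a x ≤ cval n m a b p) (Finset.Icc 1 n))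
    simp only [Nat.card_Icc] at hle
    unfold kcount at hc
    omega
  have heq : (Finset.Icc 1 n).filter (fun x => a x ≤ cval n m a b p) = Finset.Icc 1 n := by
    apply Finset.eq_of_subset_of_card_le (Finset.filter_subset _ _)
    rw [hcard]
    simp
  have hmem : n ∈ (Finset.Icc 1 n).filter (fun x => a x ≤ cval n m a b p) := by
    rw [heq]
    exact Finset.mem_Icc.2 ⟨hn, le_rfl⟩
  have h1 : a n ≤ cval n m a b p := (Finset.mem_filter.1 hmem).2
  rw [han] at h1
  have h2 : cval n m a b (p + 1) ≤ 1 := cval_le_one n m a b hma hmb han hbm hp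
  linarith

include hma hmb ha0 hb0 in
lemma a_kcount_le {p : ℕ} (hp : p + 1 ≤ n + m) :
    a (kcount n m a b p) ≤ cval n m a b p := by
  rcases Nat.eq_zero_or_pos (kcount n m a b p) with h | h
  · rw [h, ha0]
    exact cval_nonneg n m a b hma hmb ha0 hb0 (by omega)
  · have hmem : kcount n m a b p ∈
        (Finset.Icc 1 n).filter (fun x => a x ≤ cval n m a b p) :=
      (filter_prefix hma n (fun t => t ≤ cval n m a b p)
        (fun x y hxy hx => le_trans hxy hx)).2 ⟨h, le_rfl⟩
    exact (Finset.mem_filter.1 hmem).2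

include hma hmb ha0 hb0 han hbm in
lemma cval_le_a_kcount_succ (hn : 1 ≤ n) {p : ℕ} (hp : p + 1 ≤ n + m)
    (hW : cval n m a b p < cval n m a b (p + 1)) :
    cval n m a b (p + 1) ≤ a (kcount n m a b p + 1) := by
  have hklt := kcount_lt n m a b hma hmb ha0 hb0 han hbm hn hp hW
  have hnotmem : kcount n m a b p + 1 ∉
      (Finset.Icc 1 n).filter (fun x => a x ≤ cval n m a b p) := by
    intro hmem
    have := ((filter_prefix hma n (fun t => t ≤ cval n m a b p)
      (fun x y hxy hx => le_trans hxy hx)).1 hmem).2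
    unfold kcount at this
    omega
  have hgt : cval n m a b p < a (kcount n m a b p + 1) := by
    by_contra hc
    exact hnotmem (Finset.mem_filter.2
      ⟨Finset.mem_Icc.2 ⟨by omega, by omega⟩, not_lt.1 hc⟩)
  exact cval_gap n m a b hma hmb ha0 hb0 hp (by omega) (by omega) hgt

end


/-! ## Topological layer -/

section Topology

variable {X Y : Type*} [TopologicalSpace X] [TopologicalSpace Y]

/-- projection of `(X×Y)² → X²` -/
def prX : (X × Y) × (X × Y) → X × X := fun z => (z.1.1, z.2.1)

/-- projection of `(X×Y)² → Y²` -/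
def prY : (X × Y) × (X × Y) → Y × Y := fun z => (z.1.2, z.2.2)

lemma continuous_prX : Continuous (prX (X := X) (Y := Y)) := by
  unfold prX; fun_prop

lemma continuous_prY : Continuous (prY (X := X) (Y := Y)) := by
  unfold prY; fun_prop

variable {n m : ℕ} (f : PartitionOfUnity (Fin n) (X × X) Set.univ)
  (g : PartitionOfUnity (Fin m) (Y × Y) Set.univ)

/-- partial sums of the partition of unity on the `X` side -/
def tA (k : ℕ) (z : (X × Y) × (X × Y)) : ℝ :=
  ∑ i ∈ Finset.univ.filter (fun i : Fin n => (i : ℕ) < k), f i (prX z)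

/-- partial sums of the partition of unity on the `Y` side -/
def tB (k : ℕ) (z : (X × Y) × (X × Y)) : ℝ :=
  ∑ j ∈ Finset.univ.filter (fun j : Fin m => (j : ℕ) < k), g j (prY z)

lemma tA_mono (z : (X × Y) × (X × Y)) : Monotone (fun k => tA f k z) := by
  intro k k' hk
  refine Finset.sum_le_sum_of_subset_of_nonneg ?_ (fun i _ _ => f.nonneg i (prX z))
  intro i hi
  rcases Finset.mem_filter.1 hi with ⟨h1, h2⟩
  exact Finset.mem_filter.2 ⟨h1, lt_of_lt_of_le h2 hk⟩

lemma tA_zero (z : (X × Y) × (X × Y)) : tA f 0 z = 0 := by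
  unfold tA
  rw [Finset.filter_false_of_mem (fun i _ => by omega)]
  simp

lemma tA_top (z : (X × Y) × (X × Y)) : tA f n z = 1 := by
  unfold tA
  rw [Finset.filter_true_of_mem (fun i _ => i.isLt)]
  rw [← finsum_eq_sum_of_fintype (fun i => f i (prX z))]
  exact f.sum_eq_one (Set.mem_univ _)

lemma tA_succ (k : ℕ) (hk : k < n) (z : (X × Y) × (X × Y)) :
    tA f (k + 1) z = tA f k z + f ⟨k, hk⟩ (prX z) := by
  unfold tA
  have : Finset.univ.filter (fun i : Fin n => (i : ℕ) < k + 1) =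
      insert ⟨k, hk⟩ (Finset.univ.filter (fun i : Fin n => (i : ℕ) < k)) := by
    ext i
    simp only [Finset.mem_filter, Finset.mem_insert, Finset.mem_univ, true_and]
    constructor
    · intro h
      rcases Nat.lt_succ_iff_lt_or_eq.1 h with h | h
      · exact Or.inr h
      · exact Or.inl (Fin.ext h)
    · rintro (h | h)
      · simp [h]
      · omega
  rw [this, Finset.sum_insert (by simp)]
  ring

lemma tB_mono (z : (X × Y) × (X × Y)) : Monotone (fun k => tB g k z) := by
  intro k k' hk
  refine Finset.sum_le_sum_of_subset_of_nonneg ?_ (fun j _ _ => g.nonneg j (prY z))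
  intro j hj
  rcases Finset.mem_filter.1 hj with ⟨h1, h2⟩
  exact Finset.mem_filter.2 ⟨h1, lt_of_lt_of_le h2 hk⟩

lemma tB_zero (z : (X × Y) × (X × Y)) : tB g 0 z = 0 := by
  unfold tB
  rw [Finset.filter_false_of_mem (fun j _ => by omega)]
  simp

lemma tB_top (z : (X × Y) × (X × Y)) : tB g m z = 1 := by
  unfold tB
  rw [Finset.filter_true_of_mem (fun j _ => j.isLt)]
  rw [← finsum_eq_sum_of_fintype (fun j => g j (prY z))]
  exact g.sum_eq_one (Set.mem_univ _)

lemma tB_succ (k : ℕ) (hk : k < m) (z : (X × Y) × (X × Y)) :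
    tB g (k + 1) z = tB g k z + g ⟨k, hk⟩ (prY z) := by
  unfold tB
  have : Finset.univ.filter (fun j : Fin m => (j : ℕ) < k + 1) =
      insert ⟨k, hk⟩ (Finset.univ.filter (fun j : Fin m => (j : ℕ) < k)) := by
    ext j
    simp only [Finset.mem_filter, Finset.mem_insert, Finset.mem_univ, true_and]
    constructor
    · intro h
      rcases Nat.lt_succ_iff_lt_or_eq.1 h with h | h
      · exact Or.inr h
      · exact Or.inl (Fin.ext h)
    · rintro (h | h)
      · simp [h]
      · omega
  rw [this, Finset.sum_insert (by simp)]
  ring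

lemma continuous_tA (k : ℕ) : Continuous (tA (Y := Y) f k) := by
  unfold tA
  exact continuous_finset_sum _ fun i _ => (f i).continuous.comp (continuous_prX (X := X) (Y := Y))

lemma continuous_tB (k : ℕ) : Continuous (tB (X := X) g k) := by
  unfold tB
  exact continuous_finset_sum _ fun j _ => (g j).continuous.comp (continuous_prY (X := X) (Y := Y))

/-- the merged order statistics, as functions on `(X×Y)²` -/
noncomputable def cc (r : ℕ) (z : (X × Y) × (X × Y)) : ℝ :=
  cval n m (fun k => tA f k z) (fun k => tB g k z) r

lemma continuous_cc (r : ℕ) : Continuous (cc f g r) := by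
  unfold cc cval
  exact Continuous.finset_inf'_apply _ fun x _ =>
    ((continuous_tA f x).max ((continuous_tB g (r - x))))

/-- the open sets of the cover of `(X×Y)²` -/
def Wset (p : ℕ) : Set ((X × Y) × (X × Y)) := {z | cc f g p z < cc f g (p + 1) z}

lemma isOpen_Wset (p : ℕ) : IsOpen (Wset f g p) :=
  isOpen_lt (continuous_cc f g p) (continuous_cc f g (p + 1))

/-- index-selection functions -/
noncomputable def kX (p : ℕ) (z : (X × Y) × (X × Y)) : ℕ :=
  kcount n m (fun k => tA f k z) (fun k => tB g k z) p

noncomputable def kY (p : ℕ) (z : (X × Y) × (X × Y)) : ℕ :=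
  kcount m n (fun k => tB g k z) (fun k => tA f k z) p

lemma cc_comm {r : ℕ} (hr : r ≤ n + m) (z : (X × Y) × (X × Y)) :
    cc f g r z = cval m n (fun k => tB g k z) (fun k => tA f k z) r :=
  cval_comm n m _ _ hr

lemma Wset_cover (hn : 1 ≤ n) (hm : 1 ≤ m) (z : (X × Y) × (X × Y)) :
    ∃ p, p < n + m - 1 ∧ z ∈ Wset f g p := by
  by_contra hc
  push_neg at hc
  have hchain : ∀ p, p ≤ n + m - 1 → cc f g p z ≤ cc f g 0 z := by
    intro p hp
    induction p with
    | zero => exact le_rfl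
    | succ q ih =>
      have h1 : ¬ z ∈ Wset f g q := hc q (by omega)
      have h2 : cc f g (q + 1) z ≤ cc f g q z := not_lt.1 h1
      exact le_trans h2 (ih (by omega))
  have h1 := hchain (n + m - 1) le_rfl
  have h2 : cc f g (n + m - 1) z = 1 :=
    cval_top n m _ _ (tA_mono f z) (tB_mono g z) (tA_top f z) (tB_top g z) hn hm
  have h3 : cc f g 0 z = 0 :=
    cval_zero n m _ _ (tA_mono f z) (tB_mono g z) (tA_zero f z) (tB_zero g z)
  rw [h2, h3] at h1
  linarith

lemma kX_lt (hn : 1 ≤ n) {p : ℕ} (hp : p + 1 ≤ n + m) {z : (X × Y) × (X × Y)}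
    (hz : z ∈ Wset f g p) : kX f g p z < n :=
  kcount_lt n m _ _ (tA_mono f z) (tB_mono g z) (tA_zero f z) (tB_zero g z)
    (tA_top f z) (tB_top g z) hn hp hz

lemma kY_lt (hm : 1 ≤ m) {p : ℕ} (hp : p + 1 ≤ n + m) {z : (X × Y) × (X × Y)}
    (hz : z ∈ Wset f g p) : kY f g p z < m := by
  have hz' : cval m n (fun k => tB g k z) (fun k => tA f k z) p <
      cval m n (fun k => tB g k z) (fun k => tA f k z) (p + 1) := by
    rw [← cc_comm f g (by omega) z, ← cc_comm f g hp z]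
    exact hz
  exact kcount_lt m n _ _ (tB_mono g z) (tA_mono f z) (tB_zero g z) (tA_zero f z)
    (tB_top g z) (tA_top f z) hm (by omega) hz'

lemma kX_pos (hn : 1 ≤ n) {p : ℕ} (hp : p + 1 ≤ n + m) {z : (X × Y) × (X × Y)}
    (hz : z ∈ Wset f g p) (hk : kX f g p z < n) :
    0 < f ⟨kX f g p z, hk⟩ (prX z) := by
  have h1 : tA f (kX f g p z) z ≤ cc f g p z :=
    a_kcount_le n m _ _ (tA_mono f z) (tB_mono g z) (tA_zero f z) (tB_zero g z) hp
  have h2 : cc f g (p + 1) z ≤ tA f (kX f g p z + 1) z :=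
    cval_le_a_kcount_succ n m _ _ (tA_mono f z) (tB_mono g z) (tA_zero f z) (tB_zero g z)
      (tA_top f z) (tB_top g z) hn hp hz
  have h3 := tA_succ f (kX f g p z) hk z
  have h4 : cc f g p z < cc f g (p + 1) z := hz
  rw [h3] at h2
  linarith

lemma kY_pos (hm : 1 ≤ m) {p : ℕ} (hp : p + 1 ≤ n + m) {z : (X × Y) × (X × Y)}
    (hz : z ∈ Wset f g p) (hk : kY f g p z < m) :
    0 < g ⟨kY f g p z, hk⟩ (prY z) := by
  have hz' : cval m n (fun k => tB g k z) (fun k => tA f k z) p <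
      cval m n (fun k => tB g k z) (fun k => tA f k z) (p + 1) := by
    rw [← cc_comm f g (by omega) z, ← cc_comm f g hp z]
    exact hz
  have h1 : tB g (kY f g p z) z ≤ cval m n (fun k => tB g k z) (fun k => tA f k z) p :=
    a_kcount_le m n _ _ (tB_mono g z) (tA_mono f z) (tB_zero g z) (tA_zero f z) (by omega)
  have h2 : cval m n (fun k => tB g k z) (fun k => tA f k z) (p + 1) ≤
      tB g (kY f g p z + 1) z :=
    cval_le_a_kcount_succ m n _ _ (tB_mono g z) (tA_mono f z) (tB_zero g z) (tA_zero f z)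
      (tB_top g z) (tA_top f z) hm (by omega) hz'
  have h3 := tB_succ g (kY f g p z) hk z
  rw [h3] at h2
  linarith

lemma kX_eq (p : ℕ) (z : (X × Y) × (X × Y)) :
    kX f g p z = ((Finset.Icc 1 n).filter fun x => tA f x z ≤ cc f g p z).card := rfl

lemma kY_eq {p : ℕ} (hp : p ≤ n + m) (z : (X × Y) × (X × Y)) :
    kY f g p z = ((Finset.Icc 1 m).filter fun x => tB g x z ≤ cc f g p z).card := by
  unfold kY kcount
  congr 1
  apply Finset.filter_congr
  intro x _
  rw [← cc_comm f g hp z]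

lemma mem_iff_X {p : ℕ} (hp : p + 1 ≤ n + m) {z : (X × Y) × (X × Y)}
    (hz : z ∈ Wset f g p) {x : ℕ} (h1 : 1 ≤ x) (h2 : x ≤ n) :
    (tA f x z ≤ cc f g p z ↔ tA f x z < cc f g (p + 1) z) :=
  count_mem_iff n m _ _ (tA_mono f z) (tB_mono g z) (tA_zero f z) (tB_zero g z) hp hz h1 h2

lemma mem_iff_Y {p : ℕ} (hp : p + 1 ≤ n + m) {z : (X × Y) × (X × Y)}
    (hz : z ∈ Wset f g p) {x : ℕ} (h1 : 1 ≤ x) (h2 : x ≤ m) :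
    (tB g x z ≤ cc f g p z ↔ tB g x z < cc f g (p + 1) z) := by
  have hz' : cval m n (fun k => tB g k z) (fun k => tA f k z) p <
      cval m n (fun k => tB g k z) (fun k => tA f k z) (p + 1) := by
    rw [← cc_comm f g (by omega) z, ← cc_comm f g hp z]
    exact hz
  have := count_mem_iff m n _ _ (tB_mono g z) (tA_mono f z) (tB_zero g z) (tA_zero f z)
    (by omega) hz' h1 h2
  rwa [← cc_comm f g (by omega) z, ← cc_comm f g hp z] at this

lemma locally_constant {p : ℕ} (hp : p + 1 ≤ n + m) {z0 : (X × Y) × (X × Y)}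
    (hz0 : z0 ∈ Wset f g p) :
    ∃ O : Set ((X × Y) × (X × Y)), IsOpen O ∧ z0 ∈ O ∧ O ⊆ Wset f g p ∧
      ∀ z ∈ O, kX f g p z = kX f g p z0 ∧ kY f g p z = kY f g p z0 := by
  classical
  set AX : ℕ → Set ((X × Y) × (X × Y)) := fun x =>
    if tA f x z0 ≤ cc f g p z0 then {z | tA f x z < cc f g (p + 1) z}
    else {z | cc f g p z < tA f x z} with hAX
  set AY : ℕ → Set ((X × Y) × (X × Y)) := fun x =>
    if tB g x z0 ≤ cc f g p z0 then {z | tB g x z < cc f g (p + 1) z}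
    else {z | cc f g p z < tB g x z} with hAY
  have hAXopen : ∀ x, IsOpen (AX x) := by
    intro x
    rw [hAX]
    dsimp only
    split_ifs
    · exact isOpen_lt (continuous_tA f x) (continuous_cc f g (p + 1))
    · exact isOpen_lt (continuous_cc f g p) (continuous_tA f x)
  have hAYopen : ∀ x, IsOpen (AY x) := by
    intro x
    rw [hAY]
    dsimp only
    split_ifs
    · exact isOpen_lt (continuous_tB g x) (continuous_cc f g (p + 1))
    · exact isOpen_lt (continuous_cc f g p) (continuous_tB g x)
  refine ⟨Wset f g p ∩ (⋂ x ∈ Finset.Icc 1 n, AX x) ∩ (⋂ x ∈ Finset.Icc 1 m, AY x),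
    ?_, ?_, ?_, ?_⟩
  · exact (((isOpen_Wset f g p).inter (isOpen_biInter_finset fun x _ => hAXopen x)).inter
      (isOpen_biInter_finset fun x _ => hAYopen x))
  · refine ⟨⟨hz0, ?_⟩, ?_⟩
    · refine Set.mem_iInter₂.2 fun x hx => ?_
      rw [hAX]
      dsimp only
      split_ifs with h
      · exact lt_of_le_of_lt h hz0
      · exact not_le.1 h
    · refine Set.mem_iInter₂.2 fun x hx => ?_
      rw [hAY]
      dsimp only
      split_ifs with h
      · exact lt_of_le_of_lt h hz0
      · exact not_le.1 h
  · exact fun z hz => hz.1.1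
  · rintro z ⟨⟨hzW, hzX⟩, hzY⟩
    have hzX' := Set.mem_iInter₂.1 hzX
    have hzY' := Set.mem_iInter₂.1 hzY
    constructor
    · rw [kX_eq, kX_eq]
      congr 1
      apply Finset.filter_congr
      intro x hx
      rcases Finset.mem_Icc.1 hx with ⟨h1, h2⟩
      have hax := hzX' x hx
      rw [hAX] at hax
      dsimp only at hax
      split_ifs at hax with h
      · exact ⟨fun _ => h, fun _ => (mem_iff_X f g hp hzW h1 h2).2 hax⟩
      · exact ⟨fun hc => absurd hc (not_le.2 hax), fun hc => absurd hc h⟩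
    · rw [kY_eq f g (by omega), kY_eq f g (by omega)]
      congr 1
      apply Finset.filter_congr
      intro x hx
      rcases Finset.mem_Icc.1 hx with ⟨h1, h2⟩
      have hax := hzY' x hx
      rw [hAY] at hax
      dsimp only at hax
      split_ifs at hax with h
      · exact ⟨fun _ => h, fun _ => (mem_iff_Y f g hp hzW h1 h2).2 hax⟩
      · exact ⟨fun hc => absurd hc (not_le.2 hax), fun hc => absurd hc h⟩

section Planner

variable {X Y : Type*} [TopologicalSpace X] [TopologicalSpace Y] [Nonempty X] [Nonempty Y]
variable {n m : ℕ} (f : PartitionOfUnity (Fin n) (X × X) Set.univ)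
  (g : PartitionOfUnity (Fin m) (Y × Y) Set.univ)
variable (U : Fin n → Set (X × X)) (V : Fin m → Set (Y × Y))
variable (sX : ∀ i, C(U i, C(unitInterval, X))) (sY : ∀ j, C(V j, C(unitInterval, Y)))

/-- local motion planner candidates on the product -/
noncomputable def Emap (i : Fin n) (j : Fin m) (z : (X × Y) × (X × Y)) :
    C(unitInterval, X × Y) :=
  if h : prX z ∈ U i ∧ prY z ∈ V j then
    ContinuousMap.prodMk (sX i ⟨prX z, h.1⟩) (sY j ⟨prY z, h.2⟩)
  else ContinuousMap.const _ (Classical.arbitrary _)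

lemma continuousOn_Emap (i : Fin n) (j : Fin m) :
    ContinuousOn (Emap U V sX sY i j) (prX ⁻¹' U i ∩ prY ⁻¹' V j) := by
  rw [continuousOn_iff_continuous_restrict]
  have hρX : Continuous fun w : ↥(prX ⁻¹' U i ∩ prY ⁻¹' V j) =>
      (⟨prX w.1, w.2.1⟩ : ↥(U i)) :=
    ((continuous_prX (X := X) (Y := Y)).comp continuous_subtype_val).subtype_mk _
  have hρY : Continuous fun w : ↥(prX ⁻¹' U i ∩ prY ⁻¹' V j) =>
      (⟨prY w.1, w.2.2⟩ : ↥(V j)) :=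
    ((continuous_prY (X := X) (Y := Y)).comp continuous_subtype_val).subtype_mk _
  have hΦ : Continuous fun q : ↥(prX ⁻¹' U i ∩ prY ⁻¹' V j) × unitInterval =>
      ((sX i ⟨prX q.1.1, q.1.2.1⟩ q.2, sY j ⟨prY q.1.1, q.1.2.2⟩ q.2) : X × Y) := by
    refine Continuous.prodMk ?_ ?_
    · exact Continuous.eval (((sX i).continuous.comp hρX).comp continuous_fst) continuous_snd
    · exact Continuous.eval (((sY j).continuous.comp hρY).comp continuous_fst) continuous_snd
  have heq : Set.restrict (prX ⁻¹' U i ∩ prY ⁻¹' V j) (Emap U V sX sY i j) =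
      fun w => (ContinuousMap.curry ⟨_, hΦ⟩) w := by
    funext w
    have hw : prX w.1 ∈ U i ∧ prY w.1 ∈ V j := ⟨w.2.1, w.2.2⟩
    show Emap U V sX sY i j w.1 = _
    unfold Emap
    rw [dif_pos hw]
    exact ContinuousMap.ext fun t => rfl
  change Continuous (Set.restrict _ (Emap U V sX sY i j))
  rw [heq]
  exact (ContinuousMap.curry _).continuous

variable {U V} in
theorem hasMotionPlanner_Wset (hn : 1 ≤ n) (hm : 1 ≤ m)
    (hUo : ∀ i, IsOpen (U i)) (hVo : ∀ j, IsOpen (V j))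
    (hfsub : f.IsSubordinate U) (hgsub : g.IsSubordinate V)
    (hsX : ∀ i (q : U i), sX i q 0 = (q : X × X).1 ∧ sX i q 1 = (q : X × X).2)
    (hsY : ∀ j (q : V j), sY j q 0 = (q : Y × Y).1 ∧ sY j q 1 = (q : Y × Y).2)
    {p : ℕ} (hp : p + 1 ≤ n + m) : HasMotionPlanner (Wset f g p) := by
  -- membership facts
  have hmemX : ∀ {z : (X × Y) × (X × Y)} (hz : z ∈ Wset f g p),
      prX z ∈ U ⟨kX f g p z, kX_lt f g hn hp hz⟩ := by
    intro z hz
    have hpos := kX_pos f g hn hp hz (kX_lt f g hn hp hz)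
    exact hfsub _ (subset_closure (by simpa using ne_of_gt hpos))
  have hmemY : ∀ {z : (X × Y) × (X × Y)} (hz : z ∈ Wset f g p),
      prY z ∈ V ⟨kY f g p z, kY_lt f g hm hp hz⟩ := by
    intro z hz
    have hpos := kY_pos f g hm hp hz (kY_lt f g hm hp hz)
    exact hgsub _ (subset_closure (by simpa using ne_of_gt hpos))
  -- the section as a bare function
  set s0 : ↥(Wset f g p) → C(unitInterval, X × Y) := fun w =>
    Emap U V sX sY ⟨kX f g p w.1, kX_lt f g hn hp w.2⟩
      ⟨kY f g p w.1, kY_lt f g hm hp w.2⟩ w.1 with hs0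
  have hs0val : ∀ (w : ↥(Wset f g p)),
      s0 w = ContinuousMap.prodMk
        (sX ⟨kX f g p w.1, kX_lt f g hn hp w.2⟩ ⟨prX w.1, hmemX w.2⟩)
        (sY ⟨kY f g p w.1, kY_lt f g hm hp w.2⟩ ⟨prY w.1, hmemY w.2⟩) := by
    intro w
    rw [hs0]
    exact dif_pos ⟨hmemX w.2, hmemY w.2⟩
  have hcont : Continuous s0 := by
    rw [continuous_iff_continuousAt]
    intro w0
    obtain ⟨O, hOopen, hOmem, hOsub, hOconst⟩ := locally_constant f g hp w0.2
    set i0 : Fin n := ⟨kX f g p w0.1, kX_lt f g hn hp w0.2⟩ with hi0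
    set j0 : Fin m := ⟨kY f g p w0.1, kY_lt f g hm hp w0.2⟩ with hj0
    have hOgood : ∀ z ∈ O, prX z ∈ U i0 ∧ prY z ∈ V j0 := by
      intro z hzO
      have hzW := hOsub hzO
      have hiz : (⟨kX f g p z, kX_lt f g hn hp hzW⟩ : Fin n) = i0 :=
        Fin.ext (by simpa using (hOconst z hzO).1)
      have hjz : (⟨kY f g p z, kY_lt f g hm hp hzW⟩ : Fin m) = j0 :=
        Fin.ext (by simpa using (hOconst z hzO).2)
      exact ⟨hiz ▸ hmemX hzW, hjz ▸ hmemY hzW⟩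
    have hOO : IsOpen (prX ⁻¹' U i0 ∩ prY ⁻¹' V j0) :=
      ((hUo i0).preimage (continuous_prX (X := X) (Y := Y))).inter
        ((hVo j0).preimage (continuous_prY (X := X) (Y := Y)))
    have hOOmem : (prX ⁻¹' U i0 ∩ prY ⁻¹' V j0) ∈ nhds (w0 : (X × Y) × (X × Y)) :=
      hOO.mem_nhds ⟨(hOgood _ hOmem).1, (hOgood _ hOmem).2⟩
    have h1 : ContinuousAt (fun w : ↥(Wset f g p) => Emap U V sX sY i0 j0 w.1) w0 := by
      show ContinuousAt ((Emap U V sX sY i0 j0) ∘ Subtype.val) w0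
      exact ContinuousAt.comp ((continuousOn_Emap U V sX sY i0 j0).continuousAt hOOmem)
        continuous_subtype_val.continuousAt
    refine h1.congr ?_
    have hnhds : Subtype.val ⁻¹' O ∈ nhds w0 :=
      continuous_subtype_val.continuousAt.preimage_mem_nhds (hOopen.mem_nhds hOmem)
    refine Filter.eventuallyEq_of_mem hnhds fun w hw => ?_
    have hzW := hOsub hw
    have hiz : (⟨kX f g p w.1, kX_lt f g hn hp w.2⟩ : Fin n) = i0 :=
      Fin.ext (by simpa using (hOconst w.1 hw).1)
    have hjz : (⟨kY f g p w.1, kY_lt f g hm hp w.2⟩ : Fin m) = j0 :=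
      Fin.ext (by simpa using (hOconst w.1 hw).2)
    rw [hs0]
    dsimp only
    rw [hiz, hjz]
  refine ⟨⟨s0, hcont⟩, ?_⟩
  intro w
  have hval := hs0val w
  constructor
  · show s0 w 0 = _
    rw [hval, ContinuousMap.prod_eval, (hsX _ _).1, (hsY _ _).1]
    rfl
  · show s0 w 1 = _
    rw [hval, ContinuousMap.prod_eval, (hsX _ _).2, (hsY _ _).2]
    rfl

end Planner

end Topology

theorem exists_prod_cover {X Y : Type*} [MetricSpace X] [MetricSpace Y]
    [Nonempty X] [Nonempty Y] {n m : ℕ} (hn : 1 ≤ n) (hm : 1 ≤ m)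
    (U : Fin n → Set (X × X)) (hUo : ∀ i, IsOpen (U i)) (hUc : (⋃ i, U i) = Set.univ)
    (hUs : ∀ i, HasMotionPlanner (U i))
    (V : Fin m → Set (Y × Y)) (hVo : ∀ j, IsOpen (V j)) (hVc : (⋃ j, V j) = Set.univ)
    (hVs : ∀ j, HasMotionPlanner (V j)) :
    ∃ W : Fin (n + m - 1) → Set ((X × Y) × (X × Y)),
      (∀ p, IsOpen (W p)) ∧ (⋃ p, W p) = Set.univ ∧ ∀ p, HasMotionPlanner (W p) := by
  obtain ⟨f, hfsub⟩ := PartitionOfUnity.exists_isSubordinate isClosed_univ U hUo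
    (by rw [hUc])
  obtain ⟨g, hgsub⟩ := PartitionOfUnity.exists_isSubordinate isClosed_univ V hVo
    (by rw [hVc])
  choose sX hsX using hUs
  choose sY hsY using hVs
  refine ⟨fun p => Wset f g p.val, fun p => isOpen_Wset f g p.val, ?_, fun p => ?_⟩
  · ext z
    simp only [Set.mem_iUnion, Set.mem_univ, iff_true]
    obtain ⟨p, hp1, hp2⟩ := Wset_cover f g hn hm z
    exact ⟨⟨p, hp1⟩, hp2⟩
  · exact hasMotionPlanner_Wset f g sX sY hn hm hUo hVo hfsub hgsub hsX hsY
      (by omega)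

end TCAux

/-- The product inequality: `TC(X × Y) ≤ TC(X) + TC(Y) - 1` for path-connected
metric spaces `X` and `Y`. -/
theorem TC_prod_le {X Y : Type*} [MetricSpace X] [MetricSpace Y]
    [PathConnectedSpace X] [PathConnectedSpace Y] :
    topologicalComplexity (X × Y) ≤ topologicalComplexity X + topologicalComplexity Y - 1 := by
  haveI : Nonempty X := PathConnectedSpace.nonempty
  haveI : Nonempty Y := PathConnectedSpace.nonempty
  by_cases hX : topologicalComplexity X = ⊤
  · rw [hX]
    have : (⊤ : ℕ∞) + topologicalComplexity Y - 1 = ⊤ := by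
      rw [top_add]
      rfl
    rw [this]
    exact le_top
  by_cases hY : topologicalComplexity Y = ⊤
  · rw [hY]
    have : topologicalComplexity X + (⊤ : ℕ∞) - 1 = ⊤ := by
      rw [add_top]
      rfl
    rw [this]
    exact le_top
  have hneX : {c : ℕ∞ | ∃ k : ℕ, c = k ∧ ∃ U : Fin k → Set (X × X),
      (∀ i, IsOpen (U i)) ∧ (⋃ i, U i) = Set.univ ∧ ∀ i, HasMotionPlanner (U i)}.Nonempty := by
    by_contra hc
    rw [Set.not_nonempty_iff_eq_empty] at hc
    exact hX (by rw [topologicalComplexity, hc, sInf_empty])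
  have hneY : {c : ℕ∞ | ∃ k : ℕ, c = k ∧ ∃ V : Fin k → Set (Y × Y),
      (∀ j, IsOpen (V j)) ∧ (⋃ j, V j) = Set.univ ∧ ∀ j, HasMotionPlanner (V j)}.Nonempty := by
    by_contra hc
    rw [Set.not_nonempty_iff_eq_empty] at hc
    exact hY (by rw [topologicalComplexity, hc, sInf_empty])
  obtain ⟨n, hnX, U, hUo, hUc, hUs⟩ := csInf_mem hneX
  obtain ⟨m, hmY, V, hVo, hVc, hVs⟩ := csInf_mem hneY
  have hn : 1 ≤ n := by
    by_contra hc
    have hn0 : n = 0 := by omega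
    subst hn0
    have hz : (Classical.arbitrary (X × X)) ∈ (⋃ i, U i) := hUc ▸ Set.mem_univ _
    obtain ⟨i, -⟩ := Set.mem_iUnion.1 hz
    exact i.elim0
  have hm : 1 ≤ m := by
    by_contra hc
    have hm0 : m = 0 := by omega
    subst hm0
    have hz : (Classical.arbitrary (Y × Y)) ∈ (⋃ j, V j) := hVc ▸ Set.mem_univ _
    obtain ⟨j, -⟩ := Set.mem_iUnion.1 hz
    exact j.elim0
  obtain ⟨W, hWo, hWc, hWs⟩ := TCAux.exists_prod_cover hn hm U hUo hUc hUs V hVo hVc hVs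
  have hle : topologicalComplexity (X × Y) ≤ ((n + m - 1 : ℕ) : ℕ∞) :=
    sInf_le ⟨n + m - 1, rfl, W, hWo, hWc, hWs⟩
  refine hle.trans (le_of_eq ?_)
  unfold topologicalComplexity
  rw [hnX, hmY, ENat.coe_sub, Nat.cast_add, Nat.cast_one]
end

section
/- For path-connected metric spaces X_1, X_2, …, X_k one has the inequality of reduced topological complexities: TC(X_1 × X_2 × … × X_k) − 1 ≤ Σ_{i=1}^{k} (TC(X_i) − 1). -/
open unitInterval

open Set

section Aux

variable {Z W : Type*} [TopologicalSpace Z] [TopologicalSpace W]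

lemma tc_le_of_cover {k : ℕ} (U : Fin k → Set (Z × Z)) (ho : ∀ i, IsOpen (U i))
    (hc : (⋃ i, U i) = Set.univ) (hp : ∀ i, HasMotionPlanner (U i)) :
    topologicalComplexity Z ≤ (k : ℕ∞) :=
  sInf_le ⟨k, rfl, U, ho, hc, hp⟩

lemma tc_spec (h : topologicalComplexity Z ≠ ⊤) :
    ∃ k : ℕ, topologicalComplexity Z = (k : ℕ∞) ∧ ∃ U : Fin k → Set (Z × Z),
      (∀ i, IsOpen (U i)) ∧ (⋃ i, U i) = Set.univ ∧ ∀ i, HasMotionPlanner (U i) := by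
  have hne : {c : ℕ∞ | ∃ k : ℕ, c = k ∧ ∃ U : Fin k → Set (Z × Z),
      (∀ i, IsOpen (U i)) ∧ (⋃ i, U i) = Set.univ ∧ ∀ i, HasMotionPlanner (U i)}.Nonempty := by
    by_contra hq
    rw [Set.not_nonempty_iff_eq_empty] at hq
    apply h
    unfold topologicalComplexity
    rw [hq, sInf_empty]
  have hmem := csInf_mem hne
  exact hmem

lemma tc_of_isEmpty [IsEmpty Z] : topologicalComplexity Z = 0 := by
  refine le_antisymm ?_ zero_le
  have h := tc_le_of_cover (Z := Z) (k := 0) Fin.elim0 (fun i => i.elim0) ?_ (fun i => i.elim0)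
  · simpa using h
  · rw [Set.iUnion_of_empty, eq_comm, Set.univ_eq_empty_iff]
    infer_instance

lemma one_le_tc [Nonempty Z] : 1 ≤ topologicalComplexity Z := by
  refine le_sInf fun b hb => ?_
  obtain ⟨k, rfl, U, _, hc, _⟩ := hb
  rcases Nat.eq_zero_or_pos k with rfl | hk
  · exfalso
    rw [Set.iUnion_of_empty] at hc
    exact (Set.empty_ne_univ hc)
  · exact_mod_cast hk

lemma tc_le_of_homeo (e : Z ≃ₜ W) : topologicalComplexity Z ≤ topologicalComplexity W := by
  refine le_sInf fun b hb => ?_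
  obtain ⟨k, rfl, U, ho, hc, hp⟩ := hb
  refine sInf_le ⟨k, rfl, fun i => (fun z : Z × Z => ((e z.1 : W), (e z.2 : W))) ⁻¹' U i,
    fun i => (ho i).preimage (by fun_prop), ?_, fun i => ?_⟩
  · rw [← Set.preimage_iUnion, hc, Set.preimage_univ]
  · obtain ⟨s, hs⟩ := hp i
    set em : C(W, Z) := ⟨e.symm, e.symm.continuous⟩ with hem
    refine ⟨ContinuousMap.mk
      (fun p => em.comp (s ⟨(e p.1.1, e p.1.2), p.2⟩)) ?_, fun p => ?_⟩
    · exact (ContinuousMap.continuous_postcomp em).comp ((map_continuous s).comp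
        (Continuous.subtype_mk (by fun_prop) _))
    · constructor
      · simp only [ContinuousMap.coe_mk, ContinuousMap.comp_apply]
        rw [(hs _).1]
        exact e.symm_apply_apply _
      · simp only [ContinuousMap.coe_mk, ContinuousMap.comp_apply]
        rw [(hs _).2]
        exact e.symm_apply_apply _

lemma exists_bump {α : Type*} [MetricSpace α] {n : ℕ} (U : Fin n → Set α)
    (ho : ∀ i, IsOpen (U i)) :
    ∃ f : Fin n → α → ℝ, (∀ i, Continuous (f i)) ∧ (∀ i x, 0 ≤ f i x) ∧
      (∀ i x, 0 < f i x ↔ x ∈ U i) := by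
  classical
  refine ⟨fun i => if h : (U i)ᶜ.Nonempty then (fun x => Metric.infDist x (U i)ᶜ)
    else fun _ => 1, fun i => ?_, fun i x => ?_, fun i x => ?_⟩
  · dsimp only
    split
    · exact Metric.continuous_infDist_pt _
    · exact continuous_const
  · dsimp only
    split
    · exact Metric.infDist_nonneg
    · exact zero_le_one
  · dsimp only
    split
    · rename_i h
      rw [← (ho i).isClosed_compl.notMem_iff_infDist_pos h, Set.notMem_compl_iff]
    · rename_i h
      rw [Set.not_nonempty_iff_eq_empty, Set.compl_empty_iff] at h
      simp [h]

end Aux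

open Set

namespace TCPaux

variable {X Y : Type*} [TopologicalSpace X] [TopologicalSpace Y] {n m : ℕ}

def aZ (c : (X × Y) × (X × Y)) : X × X := (c.1.1, c.2.1)
def bZ (c : (X × Y) × (X × Y)) : Y × Y := (c.1.2, c.2.2)

lemma continuous_aZ : Continuous (aZ (X := X) (Y := Y)) := by unfold aZ; fun_prop
lemma continuous_bZ : Continuous (bZ (X := X) (Y := Y)) := by unfold bZ; fun_prop

variable (f : Fin n → X × X → ℝ) (g : Fin m → Y × Y → ℝ)

def VV (A : Finset (Fin n)) (B : Finset (Fin m)) : Set ((X × Y) × (X × Y)) :=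
  {c | (∀ i ∈ A, 0 < f i (aZ c)) ∧ (∀ j ∈ B, 0 < g j (bZ c)) ∧
    ∀ i ∈ A, ∀ j ∈ B, ∀ (i' : Fin n) (j' : Fin m), (i' ∉ A ∨ j' ∉ B) →
      f i' (aZ c) * g j' (bZ c) < f i (aZ c) * g j (bZ c)}

lemma isOpen_VV (hf : ∀ i, Continuous (f i)) (hg : ∀ j, Continuous (g j))
    (A : Finset (Fin n)) (B : Finset (Fin m)) : IsOpen (VV f g A B) := by
  have hc1 : ∀ i : Fin n, Continuous fun c : (X × Y) × (X × Y) => f i (aZ c) :=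
    fun i => (hf i).comp continuous_aZ
  have hc2 : ∀ j : Fin m, Continuous fun c : (X × Y) × (X × Y) => g j (bZ c) :=
    fun j => (hg j).comp continuous_bZ
  have heq : VV f g A B =
      (⋂ i ∈ A, {c : (X × Y) × (X × Y) | 0 < f i (aZ c)}) ∩
      ((⋂ j ∈ B, {c : (X × Y) × (X × Y) | 0 < g j (bZ c)}) ∩
       (⋂ i ∈ A, ⋂ j ∈ B, ⋂ (i' : Fin n), ⋂ (j' : Fin m),
         {c : (X × Y) × (X × Y) | (i' ∉ A ∨ j' ∉ B) →
           f i' (aZ c) * g j' (bZ c) < f i (aZ c) * g j (bZ c)})) := by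
    ext c
    simp only [VV, Set.mem_setOf_eq, Set.mem_inter_iff, Set.mem_iInter]
  rw [heq]
  refine IsOpen.inter (isOpen_biInter_finset fun i _ => isOpen_lt continuous_const (hc1 i))
    (IsOpen.inter (isOpen_biInter_finset fun j _ => isOpen_lt continuous_const (hc2 j)) ?_)
  refine isOpen_biInter_finset fun i _ => isOpen_biInter_finset fun j _ => ?_
  refine isOpen_iInter_of_finite fun i' => isOpen_iInter_of_finite fun j' => ?_
  by_cases hcond : i' ∉ A ∨ j' ∉ B
  · have h2 : {c : (X × Y) × (X × Y) | (i' ∉ A ∨ j' ∉ B) →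
        f i' (aZ c) * g j' (bZ c) < f i (aZ c) * g j (bZ c)} =
        {c | f i' (aZ c) * g j' (bZ c) < f i (aZ c) * g j (bZ c)} := by
      ext c; simp [hcond]
    rw [h2]
    exact isOpen_lt ((hc1 i').mul (hc2 j')) ((hc1 i).mul (hc2 j))
  · have h2 : {c : (X × Y) × (X × Y) | (i' ∉ A ∨ j' ∉ B) →
        f i' (aZ c) * g j' (bZ c) < f i (aZ c) * g j (bZ c)} = univ := by
      ext c; simp only [Set.mem_setOf_eq, Set.mem_univ, iff_true]
      exact fun h => absurd h hcond
    rw [h2]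
    exact isOpen_univ

lemma VV_mins {c : (X × Y) × (X × Y)} {A A' : Finset (Fin n)} {B B' : Finset (Fin m)}
    (hI : A.Nonempty) (hI' : A'.Nonempty) (hJ : B.Nonempty) (hJ' : B'.Nonempty)
    (hc : c ∈ VV f g A B) (hc' : c ∈ VV f g A' B')
    (hsum : (A.min' hI : ℕ) + (B.min' hJ : ℕ) = (A'.min' hI' : ℕ) + (B'.min' hJ' : ℕ)) :
    A.min' hI = A'.min' hI' ∧ B.min' hJ = B'.min' hJ' := by
  obtain ⟨hp, hq, hcm⟩ := hc
  obtain ⟨hp', hq', hcm'⟩ := hc'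
  by_cases h1 : A ⊆ A' ∧ B ⊆ B'
  · have a1 : (A'.min' hI' : ℕ) ≤ (A.min' hI : ℕ) :=
      Finset.min'_le _ _ (h1.1 (A.min'_mem hI))
    have a2 : (B'.min' hJ' : ℕ) ≤ (B.min' hJ : ℕ) :=
      Finset.min'_le _ _ (h1.2 (B.min'_mem hJ))
    exact ⟨Fin.ext (by omega), Fin.ext (by omega)⟩
  · by_cases h2 : A' ⊆ A ∧ B' ⊆ B
    · have a1 : (A.min' hI : ℕ) ≤ (A'.min' hI' : ℕ) :=
        Finset.min'_le _ _ (h2.1 (A'.min'_mem hI'))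
      have a2 : (B.min' hJ : ℕ) ≤ (B'.min' hJ' : ℕ) :=
        Finset.min'_le _ _ (h2.2 (B'.min'_mem hJ'))
      exact ⟨Fin.ext (by omega), Fin.ext (by omega)⟩
    · exfalso
      have hex : ∃ p q, p ∈ A ∧ q ∈ B ∧ (p ∉ A' ∨ q ∉ B') := by
        rcases not_and_or.mp h1 with h | h
        · obtain ⟨p, hpI, hpI'⟩ := Finset.not_subset.mp h
          exact ⟨p, B.min' hJ, hpI, B.min'_mem hJ, Or.inl hpI'⟩
        · obtain ⟨q, hqJ, hqJ'⟩ := Finset.not_subset.mp h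
          exact ⟨A.min' hI, q, A.min'_mem hI, hqJ, Or.inr hqJ'⟩
      have hex' : ∃ p q, p ∈ A' ∧ q ∈ B' ∧ (p ∉ A ∨ q ∉ B) := by
        rcases not_and_or.mp h2 with h | h
        · obtain ⟨p, hpI, hpI'⟩ := Finset.not_subset.mp h
          exact ⟨p, B'.min' hJ', hpI, B'.min'_mem hJ', Or.inl hpI'⟩
        · obtain ⟨q, hqJ, hqJ'⟩ := Finset.not_subset.mp h
          exact ⟨A'.min' hI', q, A'.min'_mem hI', hqJ, Or.inr hqJ'⟩
      obtain ⟨p, q, hpI, hqJ, hout⟩ := hex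
      obtain ⟨p', q', hp'A', hq'B', hout'⟩ := hex'
      have t1 := hcm p hpI q hqJ p' q' hout'
      have t2 := hcm' p' hp'A' q' hq'B' p q hout
      linarith

lemma exists_VV (hf0 : ∀ i x, 0 ≤ f i x) (hg0 : ∀ j y, 0 ≤ g j y)
    (c : (X × Y) × (X × Y))
    (hfx : ∃ i0, 0 < f i0 (aZ c)) (hgx : ∃ j0, 0 < g j0 (bZ c)) :
    ∃ (A : Finset (Fin n)) (B : Finset (Fin m)) (hI : A.Nonempty) (hJ : B.Nonempty),
      c ∈ VV f g A B := by
  classical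
  obtain ⟨i0, hi0⟩ := hfx
  obtain ⟨j0, hj0⟩ := hgx
  have hnn : Nonempty (Fin n) := ⟨i0⟩
  have hnm : Nonempty (Fin m) := ⟨j0⟩
  set A : Finset (Fin n) :=
    Finset.univ.filter (fun i : Fin n => ∀ i', f i' (aZ c) ≤ f i (aZ c)) with hIdef
  set B : Finset (Fin m) :=
    Finset.univ.filter (fun j : Fin m => ∀ j', g j' (bZ c) ≤ g j (bZ c)) with hJdef
  have hImax : ∀ i ∈ A, ∀ i', f i' (aZ c) ≤ f i (aZ c) := by
    intro i hi
    rw [hIdef, Finset.mem_filter] at hi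
    exact hi.2
  have hJmax : ∀ j ∈ B, ∀ j', g j' (bZ c) ≤ g j (bZ c) := by
    intro j hj
    rw [hJdef, Finset.mem_filter] at hj
    exact hj.2
  have hI : A.Nonempty := by
    obtain ⟨b, -, hb⟩ := Finset.exists_max_image Finset.univ
      (fun i : Fin n => f i (aZ c)) Finset.univ_nonempty
    refine ⟨b, ?_⟩
    rw [hIdef, Finset.mem_filter]
    exact ⟨Finset.mem_univ _, fun i' => hb i' (Finset.mem_univ _)⟩
  have hJ : B.Nonempty := by
    obtain ⟨b, -, hb⟩ := Finset.exists_max_image Finset.univ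
      (fun j : Fin m => g j (bZ c)) Finset.univ_nonempty
    refine ⟨b, ?_⟩
    rw [hJdef, Finset.mem_filter]
    exact ⟨Finset.mem_univ _, fun j' => hb j' (Finset.mem_univ _)⟩
  have hnotI : ∀ i', i' ∉ A → ∀ i ∈ A, f i' (aZ c) < f i (aZ c) := by
    intro i' hi' i hi
    rcases lt_or_ge (f i' (aZ c)) (f i (aZ c)) with h | h
    · exact h
    · refine absurd ?_ hi'
      rw [hIdef, Finset.mem_filter]
      exact ⟨Finset.mem_univ _, fun i'' => le_trans (hImax i hi i'') h⟩
  have hnotJ : ∀ j', j' ∉ B → ∀ j ∈ B, g j' (bZ c) < g j (bZ c) := by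
    intro j' hj' j hj
    rcases lt_or_ge (g j' (bZ c)) (g j (bZ c)) with h | h
    · exact h
    · refine absurd ?_ hj'
      rw [hJdef, Finset.mem_filter]
      exact ⟨Finset.mem_univ _, fun j'' => le_trans (hJmax j hj j'') h⟩
  refine ⟨A, B, hI, hJ, ⟨fun i hi => lt_of_lt_of_le hi0 (hImax i hi i0),
    fun j hj => lt_of_lt_of_le hj0 (hJmax j hj j0), ?_⟩⟩
  intro i hi j hj i' j' hor
  have hfi : 0 < f i (aZ c) := lt_of_lt_of_le hi0 (hImax i hi i0)
  have hgj : 0 < g j (bZ c) := lt_of_lt_of_le hj0 (hJmax j hj j0)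
  rcases hor with h | h
  · calc f i' (aZ c) * g j' (bZ c) ≤ f i' (aZ c) * g j (bZ c) :=
        mul_le_mul_of_nonneg_left (hJmax j hj j') (hf0 _ _)
      _ < f i (aZ c) * g j (bZ c) := mul_lt_mul_of_pos_right (hnotI i' h i hi) hgj
  · calc f i' (aZ c) * g j' (bZ c) ≤ f i (aZ c) * g j' (bZ c) :=
        mul_le_mul_of_nonneg_right (hImax i hi i') (hg0 _ _)
      _ < f i (aZ c) * g j (bZ c) := mul_lt_mul_of_pos_left (hnotJ j' h j hj) hfi

end TCPaux
lemma tc_core {X Y : Type*} [MetricSpace X] [MetricSpace Y] {n m : ℕ}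
    (hn : 0 < n) (hm : 0 < m)
    (U : Fin n → Set (X × X)) (hUo : ∀ i, IsOpen (U i)) (hUc : (⋃ i, U i) = Set.univ)
    (hUp : ∀ i, HasMotionPlanner (U i))
    (V : Fin m → Set (Y × Y)) (hVo : ∀ j, IsOpen (V j)) (hVc : (⋃ j, V j) = Set.univ)
    (hVp : ∀ j, HasMotionPlanner (V j)) :
    topologicalComplexity (X × Y) ≤ ((n + m - 1 : ℕ) : ℕ∞) := by
  classical
  obtain ⟨f, hfc, hf0, hfU⟩ := exists_bump U hUo
  obtain ⟨g, hgc, hg0, hgV⟩ := exists_bump V hVo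
  choose sU hsU using hUp
  choose sV hsV using hVp
  set O : Fin n → Fin m → Set ((X × Y) × (X × Y)) := fun i j =>
    ⋃ (A : Finset (Fin n)) (B : Finset (Fin m)) (hI : A.Nonempty) (hJ : B.Nonempty)
      (_ : A.min' hI = i) (_ : B.min' hJ = j), TCPaux.VV f g A B with hOdef
  have hOopen : ∀ i j, IsOpen (O i j) := fun i j =>
    isOpen_iUnion fun A => isOpen_iUnion fun B => isOpen_iUnion fun hI =>
      isOpen_iUnion fun hJ => isOpen_iUnion fun _ => isOpen_iUnion fun _ =>
        TCPaux.isOpen_VV f g hfc hgc A B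
  have hOsub : ∀ i j c, c ∈ O i j → TCPaux.aZ c ∈ U i ∧ TCPaux.bZ c ∈ V j := by
    intro i j c hc
    simp only [hOdef, Set.mem_iUnion] at hc
    obtain ⟨A, B, hI, hJ, hi, hj, hc⟩ := hc
    subst hi; subst hj
    exact ⟨(hfU _ _).1 (hc.1 _ (A.min'_mem hI)), (hgV _ _).1 (hc.2.1 _ (B.min'_mem hJ))⟩
  have hOdisj : ∀ (i i' : Fin n) (j j' : Fin m), (i : ℕ) + (j : ℕ) = (i' : ℕ) + (j' : ℕ) →
      ∀ c, c ∈ O i j → c ∈ O i' j' → i = i' ∧ j = j' := by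
    intro i i' j j' hsum c hc hc'
    simp only [hOdef, Set.mem_iUnion] at hc hc'
    obtain ⟨A, B, hI, hJ, hi, hj, hc⟩ := hc
    obtain ⟨A', B', hI', hJ', hi', hj', hc'⟩ := hc'
    subst hi; subst hj; subst hi'; subst hj'
    exact TCPaux.VV_mins f g hI hI' hJ hJ' hc hc' hsum
  set W : Fin (n + m - 1) → Set ((X × Y) × (X × Y)) := fun l =>
    ⋃ (i : Fin n) (j : Fin m) (_ : (i : ℕ) + (j : ℕ) = (l : ℕ)), O i j with hWdef
  refine tc_le_of_cover W (fun l => isOpen_iUnion fun i => isOpen_iUnion fun j =>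
    isOpen_iUnion fun _ => hOopen i j) ?_ ?_
  · rw [Set.eq_univ_iff_forall]
    intro c
    have hfx : ∃ i0, 0 < f i0 (TCPaux.aZ c) := by
      have h := hUc ▸ Set.mem_univ (TCPaux.aZ c)
      obtain ⟨i0, hi0⟩ := Set.mem_iUnion.mp h
      exact ⟨i0, (hfU _ _).2 hi0⟩
    have hgx : ∃ j0, 0 < g j0 (TCPaux.bZ c) := by
      have h := hVc ▸ Set.mem_univ (TCPaux.bZ c)
      obtain ⟨j0, hj0⟩ := Set.mem_iUnion.mp h
      exact ⟨j0, (hgV _ _).2 hj0⟩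
    obtain ⟨A, B, hI, hJ, hc⟩ := TCPaux.exists_VV f g hf0 hg0 c hfx hgx
    have h1 : ((A.min' hI : ℕ) + (B.min' hJ : ℕ)) < n + m - 1 := by
      have h2 := (A.min' hI).is_lt
      have h3 := (B.min' hJ).is_lt
      omega
    refine Set.mem_iUnion.mpr ⟨⟨_, h1⟩, Set.mem_iUnion.mpr ⟨A.min' hI,
      Set.mem_iUnion.mpr ⟨B.min' hJ, Set.mem_iUnion.mpr ⟨rfl, ?_⟩⟩⟩⟩
    simp only [hOdef, Set.mem_iUnion]
    exact ⟨A, B, hI, hJ, rfl, rfl, hc⟩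
  · intro l
    let S : {p : Fin n × Fin m // (p.1 : ℕ) + (p.2 : ℕ) = (l : ℕ)} → Set ↥(W l) :=
      fun p => Subtype.val ⁻¹' (O p.1.1 p.1.2)
    have hcont : ∀ p, Continuous (fun qt : ↥(S p) × unitInterval =>
        ((sU p.1.1 ⟨TCPaux.aZ qt.1.1.1, (hOsub _ _ _ qt.1.2).1⟩) qt.2,
         (sV p.1.2 ⟨TCPaux.bZ qt.1.1.1, (hOsub _ _ _ qt.1.2).2⟩) qt.2)) := by
      intro p
      have hA : Continuous fun q : ↥(S p) =>
          sU p.1.1 ⟨TCPaux.aZ q.1.1, (hOsub _ _ _ q.2).1⟩ :=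
        (map_continuous (sU p.1.1)).comp (Continuous.subtype_mk
          (TCPaux.continuous_aZ.comp (continuous_subtype_val.comp continuous_subtype_val)) _)
      have hB : Continuous fun q : ↥(S p) =>
          sV p.1.2 ⟨TCPaux.bZ q.1.1, (hOsub _ _ _ q.2).2⟩ :=
        (map_continuous (sV p.1.2)).comp (Continuous.subtype_mk
          (TCPaux.continuous_bZ.comp (continuous_subtype_val.comp continuous_subtype_val)) _)
      exact Continuous.prodMk
        (continuous_eval.comp ((hA.comp continuous_fst).prodMk continuous_snd))
        (continuous_eval.comp ((hB.comp continuous_fst).prodMk continuous_snd))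
    let φ : ∀ p, C(↥(S p), C(unitInterval, X × Y)) := fun p =>
      (ContinuousMap.mk _ (hcont p)).curry
    have hφeq : ∀ p (q : ↥(S p)) (t : unitInterval), φ p q t =
        ((sU p.1.1 ⟨TCPaux.aZ q.1.1, (hOsub _ _ _ q.2).1⟩) t,
         (sV p.1.2 ⟨TCPaux.bZ q.1.1, (hOsub _ _ _ q.2).2⟩) t) := fun p q t => rfl
    have hφ : ∀ p p' (x : ↥(W l)) (hx : x ∈ S p) (hx' : x ∈ S p'),
        φ p ⟨x, hx⟩ = φ p' ⟨x, hx'⟩ := by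
      intro p p' x hx hx'
      have hpp : p = p' := by
        obtain ⟨h1, h2⟩ := hOdisj p.1.1 p'.1.1 p.1.2 p'.1.2 (by rw [p.2, p'.2]) x.1 hx hx'
        exact Subtype.ext (Prod.ext h1 h2)
      subst hpp; rfl
    have hScov : ∀ x : ↥(W l), ∃ p, S p ∈ nhds x := by
      intro x
      have hx := x.2
      simp only [hWdef, Set.mem_iUnion] at hx
      obtain ⟨i, j, hsum, hxO⟩ := hx
      exact ⟨⟨(i, j), hsum⟩, ((hOopen i j).preimage continuous_subtype_val).mem_nhds hxO⟩
    refine ⟨ContinuousMap.liftCover S φ hφ hScov, fun q => ?_⟩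
    have hq := q.2
    simp only [hWdef, Set.mem_iUnion] at hq
    obtain ⟨i, j, hsum, hqO⟩ := hq
    have hlift := ContinuousMap.liftCover_coe (S := S) (φ := φ) (hφ := hφ) (hS := hScov)
      (i := ⟨(i, j), hsum⟩) ⟨q, hqO⟩
    rw [hlift]
    constructor
    · rw [hφeq, (hsU i _).1, (hsV j _).1]
      rfl
    · rw [hφeq, (hsU i _).2, (hsV j _).2]
      rfl

lemma tc_le_one_of_subsingleton {Z : Type*} [TopologicalSpace Z] [Subsingleton Z] :
    topologicalComplexity Z ≤ 1 := by
  have h := tc_le_of_cover (Z := Z) (k := 1) (fun _ => Set.univ) (fun _ => isOpen_univ)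
    (Set.iUnion_const _) ?_
  · simpa using h
  · intro i
    refine ⟨ContinuousMap.mk (fun p => ContinuousMap.const _ (p : Z × Z).1)
      (ContinuousMap.continuous_const'.comp (continuous_fst.comp continuous_subtype_val)),
      fun p => ?_⟩
    exact ⟨rfl, Subsingleton.elim _ _⟩

lemma tc_prod (X Y : Type*) [MetricSpace X] [MetricSpace Y] :
    topologicalComplexity (X × Y) - 1 ≤
      (topologicalComplexity X - 1) + (topologicalComplexity Y - 1) := by
  rcases isEmpty_or_nonempty X with hX | hX
  · rw [tc_of_isEmpty (Z := X × Y)]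
    simp
  rcases isEmpty_or_nonempty Y with hY | hY
  · rw [tc_of_isEmpty (Z := X × Y)]
    simp
  by_cases hXT : topologicalComplexity X = ⊤
  · rw [hXT, ENat.top_sub_one, top_add]
    exact le_top
  by_cases hYT : topologicalComplexity Y = ⊤
  · rw [hYT, ENat.top_sub_one, add_top]
    exact le_top
  obtain ⟨nn, hnn, Un, hUo, hUc, hUp⟩ := tc_spec hXT
  obtain ⟨mm, hmm, Vm, hVo, hVc, hVp⟩ := tc_spec hYT
  have h1n : 1 ≤ nn := by
    have h := one_le_tc (Z := X)
    rw [hnn] at h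
    exact_mod_cast h
  have h1m : 1 ≤ mm := by
    have h := one_le_tc (Z := Y)
    rw [hmm] at h
    exact_mod_cast h
  have hcore := tc_core (X := X) (Y := Y) (by omega) (by omega) Un hUo hUc hUp Vm hVo hVc hVp
  refine le_trans (tsub_le_tsub_right hcore 1) ?_
  have hcs : ∀ a : ℕ, ((a : ℕ∞) - 1) = ((a - 1 : ℕ) : ℕ∞) :=
    fun a => ((ENat.coe_sub a 1).trans (by rw [Nat.cast_one])).symm
  rw [hnn, hmm, hcs, hcs, hcs, ← Nat.cast_add, Nat.cast_le]
  omega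

def piSuccHomeo {k : ℕ} (X : Fin (k + 1) → Type*) [∀ i, TopologicalSpace (X i)] :
    (∀ i, X i) ≃ₜ (X 0 × ∀ i : Fin k, X i.succ) where
  toFun f := (f 0, fun i => f i.succ)
  invFun p := Fin.cons p.1 p.2
  left_inv f := by
    funext i
    refine Fin.cases ?_ (fun j => ?_) i
    · simp
    · simp
  right_inv p := by
    cases p with
    | mk a b => exact Prod.ext (by simp) (funext fun i => by simp)
  continuous_toFun := by
    exact Continuous.prodMk (continuous_apply 0) (continuous_pi fun i => continuous_apply _)
  continuous_invFun := by
    apply continuous_pi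
    intro i
    refine Fin.cases ?_ (fun j => ?_) i
    · simpa using continuous_fst
    · simpa [Function.comp_def] using (continuous_apply j).comp continuous_snd

universe u

theorem tc_pi_aux : ∀ (k : ℕ) (X : Fin k → Type u) [inst : ∀ i, MetricSpace (X i)],
    topologicalComplexity (∀ i, X i) - 1 ≤ ∑ i, (topologicalComplexity (X i) - 1) := by
  intro k
  induction k with
  | zero =>
    intro X inst
    have hsub : Subsingleton (∀ i : Fin 0, X i) := ⟨fun a b => funext fun i => i.elim0⟩
    have h1 : topologicalComplexity (∀ i : Fin 0, X i) ≤ 1 := tc_le_one_of_subsingleton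
    simp only [Finset.univ_eq_empty, Finset.sum_empty]
    exact tsub_le_iff_right.mpr (by simpa using h1)
  | succ k ih =>
    intro X inst
    calc topologicalComplexity (∀ i, X i) - 1
        ≤ topologicalComplexity (X 0 × ∀ i : Fin k, X i.succ) - 1 :=
          tsub_le_tsub_right (tc_le_of_homeo (piSuccHomeo X)) 1
      _ ≤ (topologicalComplexity (X 0) - 1) +
          (topologicalComplexity (∀ i : Fin k, X i.succ) - 1) := tc_prod _ _
      _ ≤ (topologicalComplexity (X 0) - 1) +
          ∑ i : Fin k, (topologicalComplexity (X i.succ) - 1) :=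
          add_le_add_right (ih (fun i => X i.succ)) _
      _ = ∑ i, (topologicalComplexity (X i) - 1) :=
          (Fin.sum_univ_succ (fun i => topologicalComplexity (X i) - 1)).symm


/-- Subadditivity of the reduced topological complexity `~TC = TC - 1` for finite
products of path-connected metric spaces. -/
theorem reduced_TC_pi_le {k : ℕ} (X : Fin k → Type*) [∀ i, MetricSpace (X i)]
    [∀ i, PathConnectedSpace (X i)] :
    topologicalComplexity (∀ i, X i) - 1 ≤ ∑ i, (topologicalComplexity (X i) - 1) := by
  exact tc_pi_aux k X
end

section
/- For any d ≥ 2 and n ≥ 2, the product of n−1 copies of the sphere S^{d−1} is a retract of the configuration space F(ℝ^d, n) in the following sense: the maps α : ∏_{i=1}^{n−1} S^{d−1} → F(ℝ^d, n) defined by α(u_1, …, u_{n−1}) = (z_1, …, z_n) with z_1 = 0 and z_{i+1} = z_i + 3^{i−1} u_i for i = 1, …, n−1, and β : F(ℝ^d, n) → ∏_{i=1}^{n−1} S^{d−1} defined by β(z_1, …, z_n) = (u_1, …, u_{n−1}) with u_i = (z_{i+1} − z_i)/|z_{i+1} − z_i|, are well-defined continuous maps (in particular α takes values in F(ℝ^d,n),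 i.e., the points z_i are pairwise distinct), and β ∘ α is the identity map of ∏_{i=1}^{n−1} S^{d−1}. -/
/-- The configuration space of `n` distinct ordered points in `X`. -/
abbrev Conf (X : Type*) [TopologicalSpace X] (n : ℕ) : Type _ :=
  {z : Fin n → X // Function.Injective z}

/-- The map `α : ∏_{i=1}^{n-1} S^{d-1} → F(ℝ^d, n)` (on underlying tuples):
`z_1 = 0` and `z_{i+1} = z_i + 3^{i-1} u_i`, i.e. `z_k = ∑_{j<k} 3^j • u_j`
in 0-based indexing. -/
noncomputable def alphaFun (d n : ℕ) (u : Fin (n - 1) → EuclideanSpace ℝ (Fin d)) :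
    Fin n → EuclideanSpace ℝ (Fin d) :=
  fun k => ∑ j : Fin (n - 1), if (j : ℕ) < (k : ℕ) then (3 : ℝ) ^ (j : ℕ) • u j else 0

/-- The map `β : F(ℝ^d, n) → ∏_{i=1}^{n-1} S^{d-1}` (on underlying tuples):
`u_i = (z_{i+1} - z_i) / |z_{i+1} - z_i|`. -/
noncomputable def betaFun (d n : ℕ) (z : Fin n → EuclideanSpace ℝ (Fin d)) :
    Fin (n - 1) → EuclideanSpace ℝ (Fin d) :=
  fun i =>
    ‖z ⟨(i : ℕ) + 1, by have := i.2; omega⟩ - z ⟨(i : ℕ), by have := i.2; omega⟩‖⁻¹ •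
      (z ⟨(i : ℕ) + 1, by have := i.2; omega⟩ - z ⟨(i : ℕ), by have := i.2; omega⟩)

lemma geom3_lt (m : ℕ) : ∑ i ∈ Finset.range m, (3:ℝ)^i < 3^m := by
  induction m with
  | zero => simp
  | succ m ih =>
    rw [Finset.sum_range_succ, pow_succ]
    have := pow_pos (by norm_num : (0:ℝ) < 3) m
    linarith

lemma alpha_sub (d n : ℕ) (u : Fin (n-1) → EuclideanSpace ℝ (Fin d)) (k l : Fin n)
    (h : (k:ℕ) < (l:ℕ)) :
    alphaFun d n u l - alphaFun d n u k =
      ∑ j ∈ Finset.univ.filter (fun j : Fin (n-1) => (k:ℕ) ≤ (j:ℕ) ∧ (j:ℕ) < (l:ℕ)),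
        (3:ℝ)^(j:ℕ) • u j := by
  unfold alphaFun
  rw [← Finset.sum_sub_distrib, Finset.sum_filter]
  refine Finset.sum_congr rfl fun j _ => ?_
  split_ifs <;> first | (exfalso; omega) | simp

lemma alpha_ne (d n : ℕ) (u : Fin (n-1) → EuclideanSpace ℝ (Fin d))
    (hu : ∀ j, ‖u j‖ = 1) (k l : Fin n) (h : (k:ℕ) < (l:ℕ)) :
    alphaFun d n u l ≠ alphaFun d n u k := by
  have hl1 : (l:ℕ) - 1 < n - 1 := by have := l.2; omega
  set j₀ : Fin (n-1) := ⟨(l:ℕ) - 1, hl1⟩ with hj₀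
  set S : Finset (Fin (n-1)) :=
    Finset.univ.filter (fun j : Fin (n-1) => (k:ℕ) ≤ (j:ℕ) ∧ (j:ℕ) < (l:ℕ)) with hS
  have hmem : j₀ ∈ S := by simp [hS, hj₀]; omega
  have hsplit : ∑ j ∈ S, (3:ℝ)^(j:ℕ) • u j
      = (3:ℝ)^((l:ℕ)-1) • u j₀ + ∑ j ∈ S.erase j₀, (3:ℝ)^(j:ℕ) • u j := by
    rw [← Finset.add_sum_erase _ _ hmem]
  have hrest : ‖∑ j ∈ S.erase j₀, (3:ℝ)^(j:ℕ) • u j‖ < 3^((l:ℕ)-1) := by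
    calc ‖∑ j ∈ S.erase j₀, (3:ℝ)^(j:ℕ) • u j‖
        ≤ ∑ j ∈ S.erase j₀, ‖(3:ℝ)^(j:ℕ) • u j‖ := norm_sum_le _ _
      _ = ∑ j ∈ S.erase j₀, (3:ℝ)^(j:ℕ) := by
          refine Finset.sum_congr rfl fun j _ => ?_
          rw [norm_smul, hu j, mul_one, norm_pow, Real.norm_ofNat]
      _ ≤ ∑ i ∈ Finset.range ((l:ℕ)-1), (3:ℝ)^i := by
          rw [show ∑ j ∈ S.erase j₀, (3:ℝ)^(j:ℕ)
              = ∑ i ∈ (S.erase j₀).image Fin.val, (3:ℝ)^i from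
            (Finset.sum_image (fun a _ b _ hab => Fin.val_injective hab)).symm]
          refine Finset.sum_le_sum_of_subset_of_nonneg ?_
            (fun i _ _ => by positivity)
          intro i hi
          simp only [Finset.mem_image] at hi
          obtain ⟨j, hj, rfl⟩ := hi
          rw [Finset.mem_erase, hS, Finset.mem_filter] at hj
          rw [Finset.mem_range]
          have : (j:ℕ) ≠ (l:ℕ) - 1 := fun hh => hj.1 (Fin.ext hh)
          omega
      _ < 3^((l:ℕ)-1) := geom3_lt _
  intro heq
  have h0 : alphaFun d n u l - alphaFun d n u k = 0 := by rw [heq, sub_self]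
  rw [alpha_sub d n u k l h, ← hS, hsplit] at h0
  have : ‖(3:ℝ)^((l:ℕ)-1) • u j₀‖ = 3^((l:ℕ)-1) := by
    rw [norm_smul, hu j₀, mul_one, norm_pow, Real.norm_ofNat]
  have hge := norm_sub_norm_le ((3:ℝ)^((l:ℕ)-1) • u j₀)
    (-(∑ j ∈ S.erase j₀, (3:ℝ)^(j:ℕ) • u j))
  rw [sub_neg_eq_add, h0, norm_zero, norm_neg, this] at hge
  linarith

lemma alpha_consec (d n : ℕ) (u : Fin (n-1) → EuclideanSpace ℝ (Fin d)) (i : Fin (n-1)) :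
    alphaFun d n u ⟨(i:ℕ)+1, by have := i.2; omega⟩
      - alphaFun d n u ⟨(i:ℕ), by have := i.2; omega⟩ = (3:ℝ)^(i:ℕ) • u i := by
  rw [alpha_sub d n u _ _ (by simp)]
  rw [show Finset.univ.filter (fun j : Fin (n-1) =>
      ((⟨(i:ℕ), by have := i.2; omega⟩ : Fin n) :ℕ) ≤ (j:ℕ) ∧
        (j:ℕ) < ((⟨(i:ℕ)+1, by have := i.2; omega⟩ : Fin n):ℕ)) = {i} from ?_]
  · simp
  · ext j
    simp only [Finset.mem_filter, Finset.mem_univ, true_and, Finset.mem_singleton,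
      Fin.ext_iff]
    omega

/-- The product of `n - 1` copies of the sphere `S^{d-1}` is a retract of the
configuration space `F(ℝ^d, n)`:  `α` is a well-defined continuous map into
`F(ℝ^d, n)`, `β` is a well-defined continuous map into the product of spheres, and
`β ∘ α = id`. -/
theorem spheres_retract_of_conf (d n : ℕ) (hd : 2 ≤ d) (hn : 2 ≤ n) :
    -- `α` takes values in the configuration space: the points are pairwise distinct
    (∀ u : Fin (n - 1) → Metric.sphere (0 : EuclideanSpace ℝ (Fin d)) 1,
      Function.Injective (alphaFun d n (fun j => (u j : EuclideanSpace ℝ (Fin d))))) ∧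
    -- `α` is continuous
    (Continuous fun u : Fin (n - 1) → Metric.sphere (0 : EuclideanSpace ℝ (Fin d)) 1 =>
      alphaFun d n (fun j => (u j : EuclideanSpace ℝ (Fin d)))) ∧
    -- `β` takes values in the product of unit spheres
    (∀ z : Conf (EuclideanSpace ℝ (Fin d)) n, ∀ i,
      betaFun d n z.1 i ∈ Metric.sphere (0 : EuclideanSpace ℝ (Fin d)) 1) ∧
    -- `β` is continuous on the configuration space
    (Continuous fun z : Conf (EuclideanSpace ℝ (Fin d)) n => betaFun d n z.1) ∧
    -- `β ∘ α` is the identity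
    (∀ u : Fin (n - 1) → Metric.sphere (0 : EuclideanSpace ℝ (Fin d)) 1, ∀ i,
      betaFun d n (alphaFun d n (fun j => (u j : EuclideanSpace ℝ (Fin d)))) i = u i) := by
  have hne_idx : ∀ i : Fin (n-1),
      (⟨(i:ℕ)+1, by have := i.2; omega⟩ : Fin n) ≠ ⟨(i:ℕ), by have := i.2; omega⟩ := by
    intro i h
    simpa [Fin.ext_iff] using h
  have hdiff_ne : ∀ z : Conf (EuclideanSpace ℝ (Fin d)) n, ∀ i : Fin (n-1),
      z.1 ⟨(i:ℕ)+1, by have := i.2; omega⟩ - z.1 ⟨(i:ℕ), by have := i.2; omega⟩ ≠ 0 := by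
    intro z i h
    exact hne_idx i (z.2 (sub_eq_zero.mp h))
  refine ⟨?_, ?_, ?_, ?_, ?_⟩
  · -- injectivity of α
    intro u a b hab
    by_contra hne
    have hv : (a:ℕ) ≠ (b:ℕ) := fun h => hne (Fin.ext h)
    have hu : ∀ j, ‖(u j : EuclideanSpace ℝ (Fin d))‖ = 1 :=
      fun j => norm_eq_of_mem_sphere (u j)
    rcases hv.lt_or_gt with h | h
    · exact alpha_ne d n _ hu a b h hab.symm
    · exact alpha_ne d n _ hu b a h hab
  · -- continuity of α
    refine continuous_pi fun k => ?_
    unfold alphaFun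
    refine continuous_finset_sum _ fun j _ => ?_
    by_cases hc : (j:ℕ) < (k:ℕ)
    · simp only [if_pos hc]
      exact ((continuous_apply j : Continuous fun p : Fin (n - 1) → Metric.sphere (0 : EuclideanSpace ℝ (Fin d)) 1 => p j).subtype_val).const_smul ((3 : ℝ) ^ (j : ℕ))
    · simp only [if_neg hc]
      exact continuous_const
  · -- β lands in the spheres
    intro z i
    have hv := hdiff_ne z i
    simp only [betaFun, mem_sphere_iff_norm, sub_zero, norm_smul, norm_inv, norm_norm]
    exact inv_mul_cancel₀ (norm_ne_zero_iff.mpr hv)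
  · -- continuity of β
    refine continuous_pi fun i => ?_
    unfold betaFun
    have hg : Continuous fun z : Conf (EuclideanSpace ℝ (Fin d)) n =>
        z.1 ⟨(i:ℕ)+1, by have := i.2; omega⟩ - z.1 ⟨(i:ℕ), by have := i.2; omega⟩ :=
      ((continuous_apply _).comp continuous_subtype_val).sub
        ((continuous_apply _).comp continuous_subtype_val)
    exact (hg.norm.inv₀ fun z => norm_ne_zero_iff.mpr (hdiff_ne z i)).smul hg
  · -- β ∘ α = id
    intro u i
    have hu : ‖(u i : EuclideanSpace ℝ (Fin d))‖ = 1 := norm_eq_of_mem_sphere (u i)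
    simp only [betaFun]
    rw [alpha_consec d n (fun j => (u j : EuclideanSpace ℝ (Fin d))) i]
    rw [norm_smul, hu, mul_one, norm_pow, Real.norm_ofNat, smul_smul,
      inv_mul_cancel₀ (by positivity), one_smul]
end

section
/- Let Γ be a connected finite graph having at least one essential vertex (a vertex incident to at least 3 edges). Then for every n the configuration space F(Γ, n) of n distinct ordered points on Γ is connected. -/
/-- A finite (multi-)graph: finitely many vertices and edges, each edge having a
source and a target vertex. -/
structure FinGraph where
  V : Type
  E : Type
  [fintypeV : Fintype V]
  [fintypeE : Fintype E]
  s : E → V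
  t : E → V

attribute [instance] FinGraph.fintypeV FinGraph.fintypeE

namespace FinGraph

variable (G : FinGraph)

instance : TopologicalSpace G.V := ⊥
instance : TopologicalSpace G.E := ⊥

/-- The gluing relation of the geometric realization: the endpoints of each edge
(a copy of `[0,1]`) are identified with its source and target vertices. -/
inductive GlueRel (G : FinGraph) :
    (G.E × unitInterval ⊕ G.V) → (G.E × unitInterval ⊕ G.V) → Prop
  | src (e : G.E) : GlueRel G (Sum.inl (e, 0)) (Sum.inr (G.s e))
  | tgt (e : G.E) : GlueRel G (Sum.inl (e, 1)) (Sum.inr (G.t e))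

/-- The geometric realization of a finite graph: a compact 1-dimensional CW complex. -/
def Space (G : FinGraph) : Type := Quot (GlueRel G)

instance : TopologicalSpace G.Space := inferInstanceAs (TopologicalSpace (Quot _))

/-- The point of the realization corresponding to a vertex. -/
def vtx (v : G.V) : G.Space := Quot.mk _ (Sum.inr v)

/-- The point of the realization at parameter `x` along the edge `e`. -/
def edgePt (e : G.E) (x : unitInterval) : G.Space := Quot.mk _ (Sum.inl (e, x))

/-- The degree `η(v)` of a vertex: the number of edge-ends incident to it
(a loop counts twice). -/
noncomputable def degree (v : G.V) : ℕ :=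
  Nat.card {e : G.E // G.s e = v} + Nat.card {e : G.E // G.t e = v}

end FinGraph



namespace FinGraph

variable {G : FinGraph}

open unitInterval

instance : DiscreteTopology G.V := ⟨rfl⟩
instance : DiscreteTopology G.E := ⟨rfl⟩

/-- Normal form of a representative. -/
noncomputable def nf (G : FinGraph) : (G.E × unitInterval ⊕ G.V) → (G.E × unitInterval ⊕ G.V)
  | Sum.inl (e, x) => if x = 0 then Sum.inr (G.s e) else if x = 1 then Sum.inr (G.t e)
      else Sum.inl (e, x)
  | Sum.inr w => Sum.inr w

lemma nf_glue {a b} (h : GlueRel G a b) : G.nf a = G.nf b := by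
  cases h with
  | src e => simp [nf]
  | tgt e => simp [nf, one_ne_zero, unitInterval.coe_ne_zero]

/-- Normal form descends to the realization. -/
noncomputable def nfQ (G : FinGraph) : G.Space → (G.E × unitInterval ⊕ G.V) :=
  Quot.lift G.nf (fun _ _ h => nf_glue h)

lemma nfQ_vtx (w : G.V) : G.nfQ (G.vtx w) = Sum.inr w := rfl

lemma nfQ_edgePt (e : G.E) (x : unitInterval) (h0 : x ≠ 0) (h1 : x ≠ 1) :
    G.nfQ (G.edgePt e x) = Sum.inl (e, x) := by
  simp [nfQ, edgePt, nf, h0, h1]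

lemma edgePt_zero (e : G.E) : G.edgePt e 0 = G.vtx (G.s e) := Quot.sound (GlueRel.src e)

lemma edgePt_one (e : G.E) : G.edgePt e 1 = G.vtx (G.t e) := Quot.sound (GlueRel.tgt e)

lemma vtx_injective : Function.Injective G.vtx := by
  intro a b h
  have := congrArg G.nfQ h
  simpa [nfQ_vtx] using this

lemma edgePt_ne_vtx (e : G.E) (x : unitInterval) (h0 : x ≠ 0) (h1 : x ≠ 1) (w : G.V) :
    G.edgePt e x ≠ G.vtx w := by
  intro h
  have := congrArg G.nfQ h
  rw [nfQ_edgePt e x h0 h1, nfQ_vtx] at this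
  exact absurd this (by simp)

lemma edgePt_inj {e e' : G.E} {x x' : unitInterval} (h0 : x ≠ 0) (h1 : x ≠ 1)
    (h : G.edgePt e x = G.edgePt e' x') : e = e' ∧ x = x' := by
  by_cases h0' : x' = 0
  · exact absurd (h.trans (by rw [h0', edgePt_zero])) (edgePt_ne_vtx e x h0 h1 _)
  · by_cases h1' : x' = 1
    · exact absurd (h.trans (by rw [h1', edgePt_one])) (edgePt_ne_vtx e x h0 h1 _)
    · have := congrArg G.nfQ h
      rw [nfQ_edgePt e x h0 h1, nfQ_edgePt e' x' h0' h1'] at this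
      simpa using this


lemma continuous_edgePt (e : G.E) : Continuous fun x => G.edgePt e x := by
  have h1 : Continuous (Quot.mk (GlueRel G)) := continuous_quot_mk
  have h2 : Continuous fun x : unitInterval => (Sum.inl (e, x) : G.E × unitInterval ⊕ G.V) :=
    continuous_inl.comp (Continuous.prodMk_right e)
  exact h1.comp h2

/-- Every point of the realization is a vertex or an interior edge point. -/
lemma space_cases (p : G.Space) :
    (∃ w, p = G.vtx w) ∨ ∃ e x, x ≠ 0 ∧ x ≠ 1 ∧ p = G.edgePt e x := by
  obtain ⟨a, rfl⟩ := Quot.exists_rep p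
  rcases a with ⟨e, x⟩ | w
  · by_cases h0 : x = 0
    · exact Or.inl ⟨G.s e, by rw [h0]; exact (edgePt_zero e) ▸ rfl⟩
    · by_cases h1 : x = 1
      · exact Or.inl ⟨G.t e, by rw [h1]; exact (edgePt_one e) ▸ rfl⟩
      · exact Or.inr ⟨e, x, h0, h1, rfl⟩
  · exact Or.inl ⟨w, rfl⟩

end FinGraph
namespace FinGraph

open unitInterval Set

/-- Convex combination inside the unit interval. -/
noncomputable def seg (a b t : unitInterval) : unitInterval :=
  ⟨(1 - (t:ℝ)) * a + t * b, by
    constructor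
    · nlinarith [a.2.1, a.2.2, b.2.1, b.2.2, t.2.1, t.2.2]
    · nlinarith [a.2.1, a.2.2, b.2.1, b.2.2, t.2.1, t.2.2]⟩

lemma seg_zero (a b : unitInterval) : seg a b 0 = a := by
  simp [seg]

lemma seg_one (a b : unitInterval) : seg a b 1 = b := by
  simp [seg]

lemma seg_mem_uIcc (a b t : unitInterval) : ((seg a b t : ℝ)) ∈ Set.uIcc (a:ℝ) (b:ℝ) := by
  rw [Set.uIcc_eq_union]
  rcases le_total (a:ℝ) (b:ℝ) with h | h
  · left
    constructor
    · show (a:ℝ) ≤ (1 - (t:ℝ)) * a + t * b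
      nlinarith [t.2.1, t.2.2]
    · show (1 - (t:ℝ)) * a + t * b ≤ (b:ℝ)
      nlinarith [t.2.1, t.2.2]
  · right
    constructor
    · show (b:ℝ) ≤ (1 - (t:ℝ)) * a + t * b
      nlinarith [t.2.1, t.2.2]
    · show (1 - (t:ℝ)) * a + t * b ≤ (a:ℝ)
      nlinarith [t.2.1, t.2.2]

lemma continuous_seg (a b : unitInterval) : Continuous fun t => seg a b t := by
  apply Continuous.subtype_mk
  continuity

variable {G : FinGraph} {n : ℕ}

/-- Construct a `Joined` in configuration space from a family of maps. -/
lemma joined_of (z w : Conf G.Space n) (f : unitInterval → Fin n → G.Space)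
    (hc : ∀ i, Continuous fun t => f t i) (hinj : ∀ t, Function.Injective (f t))
    (h0 : f 0 = z.1) (h1 : f 1 = w.1) : Joined z w := by
  refine ⟨⟨⟨fun t => ⟨f t, hinj t⟩, ?_⟩, ?_, ?_⟩⟩
  · exact Continuous.subtype_mk (continuous_pi hc) _
  · exact Subtype.ext h0
  · exact Subtype.ext h1

/-- Slide one point along an edge, keeping the others fixed. -/
lemma slide (z : Conf G.Space n) (i : Fin n) (e : G.E) (a b : unitInterval)
    (hz : z.1 i = G.edgePt e a)
    (hfree : ∀ j, j ≠ i → ∀ x : unitInterval,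
      (x:ℝ) ∈ Set.uIcc (a:ℝ) (b:ℝ) → z.1 j ≠ G.edgePt e x) :
    ∃ w : Conf G.Space n, w.1 = Function.update z.1 i (G.edgePt e b) ∧ Joined z w := by
  have hb : ∀ t, Function.Injective (Function.update z.1 i (G.edgePt e (seg a b t))) := by
    intro t j1 j2 h
    by_cases h1 : j1 = i <;> by_cases h2 : j2 = i
    · rw [h1, h2]
    · rw [h1, Function.update_self, Function.update_of_ne h2] at h
      exact absurd h.symm (hfree j2 h2 _ (seg_mem_uIcc a b t))
    · rw [h2, Function.update_self, Function.update_of_ne h1] at h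
      exact absurd h (hfree j1 h1 _ (seg_mem_uIcc a b t))
    · rw [Function.update_of_ne h1, Function.update_of_ne h2] at h
      exact z.2 h
  refine ⟨⟨Function.update z.1 i (G.edgePt e b), by simpa [seg_one] using hb 1⟩, rfl, ?_⟩
  apply joined_of _ _ (fun t => Function.update z.1 i (G.edgePt e (seg a b t)))
  · intro j
    by_cases hj : j = i
    · subst hj
      simp only [Function.update_self]
      exact (FinGraph.continuous_edgePt e).comp (continuous_seg a b)
    · simp only [Function.update_of_ne hj]
      exact continuous_const
  · exact hb
  · rw [seg_zero, ← hz]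
    exact Function.update_eq_self i z.1
  · simp [seg_one]

end FinGraph
namespace FinGraph

open unitInterval Set

variable (G : FinGraph)

/-- Adjacency of vertices. -/
def Adj (a b : G.V) : Prop := ∃ e, (G.s e = a ∧ G.t e = b) ∨ (G.s e = b ∧ G.t e = a)

lemma Adj.symm' {G : FinGraph} {a b : G.V} (h : G.Adj a b) : G.Adj b a := by
  obtain ⟨e, h⟩ := h; exact ⟨e, h.symm⟩

/-- Chains of length `k` from `v`. -/
def chain (v : G.V) : ℕ → G.V → Prop
  | 0, w => w = v
  | (k+1), w => ∃ u, chain v k u ∧ G.Adj u w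

lemma reach_all [ConnectedSpace G.Space] (v w : G.V) : ∃ k, G.chain v k w := by
  classical
  -- the invariant predicate on representatives
  set good : (G.E × unitInterval ⊕ G.V) → Prop := fun a =>
    match a with
    | Sum.inl (e, _) => ∃ k, G.chain v k (G.s e)
    | Sum.inr u => ∃ k, G.chain v k u with hgood
  have hglue : ∀ a b, GlueRel G a b → good a = good b := by
    intro a b h
    cases h with
    | src e => rfl
    | tgt e =>
      apply propext
      constructor
      · rintro ⟨k, hk⟩
        exact ⟨k + 1, ⟨G.s e, hk, ⟨e, Or.inl ⟨rfl, rfl⟩⟩⟩⟩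
      · rintro ⟨k, hk⟩
        exact ⟨k + 1, ⟨G.t e, hk, ⟨e, Or.inr ⟨rfl, rfl⟩⟩⟩⟩
  set SQ : G.Space → Prop := Quot.lift good hglue with hSQ
  have hpre : Quot.mk (GlueRel G) ⁻¹' {p | SQ p} = {a | good a} := rfl
  have hopen : ∀ T : Set (G.E × unitInterval ⊕ G.V),
      (∀ e x y, ((Sum.inl (e,x) : G.E × unitInterval ⊕ G.V) ∈ T ↔ Sum.inl (e,y) ∈ T)) →
      IsOpen T := by
    intro T hT
    rw [isOpen_sum_iff]
    constructor
    · have : Sum.inl ⁻¹' T = (Prod.fst) ⁻¹' {e : G.E | Sum.inl (e, 0) ∈ T} := by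
        ext ⟨e, x⟩
        simp [hT e x 0]
      rw [this]
      exact (isOpen_discrete _).preimage continuous_fst
    · exact isOpen_discrete _
  have hfib : ∀ e (x y : unitInterval), good (Sum.inl (e,x)) ↔ good (Sum.inl (e,y)) :=
    fun e x y => Iff.rfl
  have hclopen : IsClopen {p : G.Space | SQ p} := by
    constructor
    · rw [← isOpen_compl_iff]; apply (isQuotientMap_quot_mk (r := GlueRel G)).isOpen_preimage.mp
      exact hopen _ (fun e x y => Iff.rfl)
    · apply (isQuotientMap_quot_mk (r := GlueRel G)).isOpen_preimage.mp
      exact hopen _ (fun e x y => Iff.rfl)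
  have huniv : {p : G.Space | SQ p} = Set.univ := by
    apply hclopen.eq_univ
    exact ⟨G.vtx v, show good (Sum.inr v) from ⟨0, rfl⟩⟩
  exact Set.eq_univ_iff_forall.mp huniv (G.vtx w)

variable (v : G.V)

/-- Combinatorial level of a vertex (distance to `v`). -/
noncomputable def lvl (w : G.V) : ℕ := sInf {k | G.chain v k w}

variable [ConnectedSpace G.Space]

lemma chain_lvl (w : G.V) : G.chain v (G.lvl v w) w :=
  Nat.sInf_mem (G.reach_all v w)

lemma lvl_le {k : ℕ} {w : G.V} (h : G.chain v k w) : G.lvl v w ≤ k :=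
  Nat.sInf_le h

lemma lvl_eq_zero {w : G.V} (h : G.lvl v w = 0) : w = v := by
  have := G.chain_lvl v w
  rw [h] at this
  exact this

lemma lvl_parent {w : G.V} (h : G.lvl v w ≠ 0) :
    ∃ u, G.Adj u w ∧ G.lvl v u < G.lvl v w := by
  obtain ⟨k, hk⟩ := Nat.exists_eq_succ_of_ne_zero h
  have hc := G.chain_lvl v w
  rw [hk] at hc
  obtain ⟨u, hu, hadj⟩ := hc
  exact ⟨u, hadj, lt_of_le_of_lt (G.lvl_le v hu) (by omega)⟩

/-- The vertex at an edge-end. -/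
def endV (d : G.E × Bool) : G.V := if d.2 then G.t d.1 else G.s d.1

lemma exists_end (hv : 3 ≤ G.degree v) (w : G.V) : ∃ d : G.E × Bool, G.endV d = w := by
  by_cases hw : w = v
  · subst hw
    by_contra hno
    push_neg at hno
    have h1 : IsEmpty {e : G.E // G.s e = w} := by
      constructor; rintro ⟨e, he⟩; exact hno (e, false) he
    have h2 : IsEmpty {e : G.E // G.t e = w} := by
      constructor; rintro ⟨e, he⟩; exact hno (e, true) he
    rw [degree, Nat.card_of_isEmpty, Nat.card_of_isEmpty] at hv
    omega
  · have h0 : G.lvl v w ≠ 0 := fun h => hw (G.lvl_eq_zero v h)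
    obtain ⟨u, ⟨e, he⟩, _⟩ := G.lvl_parent v h0
    rcases he with ⟨_, h2⟩ | ⟨h1, _⟩
    · exact ⟨(e, true), h2⟩
    · exact ⟨(e, false), h1⟩

/-- Level of an edge. -/
noncomputable def elvl (f : G.E) : ℕ := min (G.lvl v (G.s f)) (G.lvl v (G.t f))

lemma transfer_data {f : G.E} (h : G.elvl v f ≠ 0) :
    ∃ (b0 : Bool) (d1 : G.E × Bool), G.endV (f, b0) = G.endV d1 ∧
      G.lvl v (G.endV (f, b0)) = G.elvl v f ∧ G.elvl v d1.1 < G.elvl v f := by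
  have key : ∀ (w : G.V), G.lvl v w = G.elvl v f → ∃ d1 : G.E × Bool,
      w = G.endV d1 ∧ G.elvl v d1.1 < G.elvl v f := by
    intro w hw
    have h0 : G.lvl v w ≠ 0 := by rw [hw]; exact h
    obtain ⟨u, ⟨e, he⟩, hu⟩ := G.lvl_parent v h0
    rcases he with ⟨h1, h2⟩ | ⟨h1, h2⟩
    · refine ⟨(e, true), h2.symm, ?_⟩
      calc G.elvl v e ≤ G.lvl v (G.s e) := min_le_left _ _
        _ = G.lvl v u := by rw [h1]
        _ < G.elvl v f := by rw [← hw]; exact hu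
    · refine ⟨(e, false), h1.symm, ?_⟩
      calc G.elvl v e ≤ G.lvl v (G.t e) := min_le_right _ _
        _ = G.lvl v u := by rw [h2]
        _ < G.elvl v f := by rw [← hw]; exact hu
  rcases le_total (G.lvl v (G.s f)) (G.lvl v (G.t f)) with hle | hle
  · obtain ⟨d1, hw, hlt⟩ := key (G.s f) (min_eq_left hle).symm
    exact ⟨false, d1, by simpa [endV] using hw, by simp [endV, elvl, min_eq_left hle], hlt⟩
  · obtain ⟨d1, hw, hlt⟩ := key (G.t f) (min_eq_right hle).symm
    exact ⟨true, d1, by simpa [endV] using hw, by simp [endV, elvl, min_eq_right hle], hlt⟩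

end FinGraph
namespace FinGraph

open unitInterval Set

variable {G : FinGraph} {n : ℕ}

/-- Raw pair of an edge-end coordinate. -/
noncomputable def dpr (G : FinGraph) (d : G.E × Bool) (x : unitInterval) : G.E × unitInterval :=
  (d.1, if d.2 then unitInterval.symm x else x)

/-- Point at parameter `x` along the edge-end `d`. -/
noncomputable def dpt (G : FinGraph) (d : G.E × Bool) (x : unitInterval) : G.Space :=
  G.edgePt (G.dpr d x).1 (G.dpr d x).2

/-- End-parameter of a raw pair. -/
noncomputable def dpm (G : FinGraph) (d : G.E × Bool) (p : G.E × unitInterval) : unitInterval :=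
  if d.2 then unitInterval.symm p.2 else p.2

lemma dpt_zero (d : G.E × Bool) : G.dpt d 0 = G.vtx (G.endV d) := by
  rcases d with ⟨e, _ | _⟩
  · simp [dpt, dpr, endV, edgePt_zero]
  · simp [dpt, dpr, endV, symm_zero, edgePt_one]

lemma dpr_dpm {d : G.E × Bool} {p : G.E × unitInterval} (h : p.1 = d.1) :
    G.dpr d (G.dpm d p) = p := by
  rcases d with ⟨e, b⟩
  rcases p with ⟨pe, px⟩
  simp only at h
  subst h
  cases b <;> simp [dpr, dpm]

lemma dpm_dpr (d : G.E × Bool) (x : unitInterval) : G.dpm d (G.dpr d x) = x := by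
  rcases d with ⟨e, b⟩; cases b <;> simp [dpr, dpm]

lemma coe_dpm (d : G.E × Bool) (p : G.E × unitInterval) :
    (G.dpm d p : ℝ) = if d.2 then 1 - (p.2 : ℝ) else (p.2 : ℝ) := by
  rcases d with ⟨e, b⟩; cases b <;> simp [dpm]

lemma dpr_param (d : G.E × Bool) (x : unitInterval) :
    ((G.dpr d x).2 : ℝ) = if d.2 then 1 - (x : ℝ) else (x : ℝ) := by
  rcases d with ⟨e, b⟩; cases b <;> simp [dpr]

lemma dpr_ne_of_ne {d d' : G.E × Bool} {x x' : unitInterval} (hd : d ≠ d')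
    (hx : (x:ℝ) < 1/2) (hx' : (x':ℝ) < 1/2) : G.dpr d x ≠ G.dpr d' x' := by
  intro h
  rw [Prod.ext_iff] at h
  obtain ⟨h1, h2⟩ := h
  simp only [dpr] at h1 h2
  by_cases hb : d.2 = d'.2
  · exact hd (Prod.ext h1 hb)
  · have := congrArg (fun y : unitInterval => (y:ℝ)) h2
    rcases hb2 : d.2 <;> rcases hb2' : d'.2 <;>
      simp [hb2, hb2', unitInterval.coe_symm_eq] at this hb <;> linarith

/-- Slide a point along an edge-end coordinate. -/
lemma dslide (z : Conf G.Space n) (i : Fin n) (d : G.E × Bool) (a b : unitInterval)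
    (hz : z.1 i = G.dpt d a)
    (hfree : ∀ j, j ≠ i → ∀ x : unitInterval,
      (x:ℝ) ∈ Set.uIcc (a:ℝ) (b:ℝ) → z.1 j ≠ G.dpt d x) :
    ∃ w : Conf G.Space n, w.1 = Function.update z.1 i (G.dpt d b) ∧ Joined z w := by
  rcases d with ⟨e, b'⟩
  cases b' with
  | false =>
    exact slide z i e a b hz (by simpa [dpt, dpr] using hfree)
  | true =>
    have hfree' : ∀ j, j ≠ i → ∀ x : unitInterval,
        (x:ℝ) ∈ Set.uIcc ((unitInterval.symm a : unitInterval) : ℝ)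
          ((unitInterval.symm b : unitInterval) : ℝ) →
        z.1 j ≠ G.edgePt e x := by
      intro j hj x hx
      have h2 : ((unitInterval.symm x : ℝ)) ∈ Set.uIcc (a:ℝ) (b:ℝ) := by
        simp only [Set.mem_uIcc, unitInterval.coe_symm_eq] at hx ⊢
        rcases hx with ⟨h1, h2⟩ | ⟨h1, h2⟩
        · right; constructor <;> linarith
        · left; constructor <;> linarith
      have := hfree j hj (unitInterval.symm x) h2
      simpa [dpt, dpr] using this
    obtain ⟨w, hw, hjoin⟩ := slide z i e (unitInterval.symm a) (unitInterval.symm b)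
      (by simpa [dpt, dpr] using hz) hfree'
    exact ⟨w, by simpa [dpt, dpr] using hw, hjoin⟩

/-- Move one point across the vertex joining two edge-ends. -/
lemma cross (z : Conf G.Space n) (i : Fin n) (d d' : G.E × Bool)
    (hvv : G.endV d = G.endV d') (a b : unitInterval) (hz : z.1 i = G.dpt d a)
    (hf1 : ∀ j, j ≠ i → ∀ x : unitInterval, (x:ℝ) ≤ (a:ℝ) → z.1 j ≠ G.dpt d x)
    (hf2 : ∀ j, j ≠ i → ∀ x : unitInterval, (x:ℝ) ≤ (b:ℝ) → z.1 j ≠ G.dpt d' x) :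
    ∃ w : Conf G.Space n, w.1 = Function.update z.1 i (G.dpt d' b) ∧ Joined z w := by
  have hfa : ∀ j, j ≠ i → ∀ x : unitInterval,
      (x:ℝ) ∈ Set.uIcc (a:ℝ) ((0 : unitInterval):ℝ) → z.1 j ≠ G.dpt d x := by
    intro j hj x hx
    apply hf1 j hj x
    rcases Set.mem_uIcc.mp hx with ⟨h1, h2⟩ | ⟨h1, h2⟩
    · have ha := a.2.1
      norm_num at h2
      linarith
    · exact h2
  obtain ⟨w1, hw1, hj1⟩ := dslide z i d a 0 hz hfa
  have hz1 : w1.1 i = G.dpt d' 0 := by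
    rw [hw1, Function.update_self, dpt_zero, hvv, ← dpt_zero]
  have hfb : ∀ j, j ≠ i → ∀ x : unitInterval,
      (x:ℝ) ∈ Set.uIcc (((0 : unitInterval)):ℝ) ((b:ℝ)) → w1.1 j ≠ G.dpt d' x := by
    intro j hj x hx
    rw [hw1, Function.update_of_ne hj]
    apply hf2 j hj x
    rcases Set.mem_uIcc.mp hx with ⟨h1, h2⟩ | ⟨h1, h2⟩
    · exact h2
    · have hb := b.2.1
      norm_num at h2
      linarith
  obtain ⟨w2, hw2, hj2⟩ := dslide w1 i d' 0 b hz1 hfb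
  refine ⟨w2, ?_, hj1.trans hj2⟩
  rw [hw2, hw1, Function.update_idem]

/-- Realization of a combinatorial configuration. -/
noncomputable def cR (G : FinGraph) (c : Fin n → G.E × unitInterval) : Fin n → G.Space :=
  fun j => G.edgePt (c j).1 (c j).2

/-- All points have interior parameters. -/
def IntCfg (c : Fin n → G.E × unitInterval) : Prop :=
  ∀ j, 0 < ((c j).2 : ℝ) ∧ ((c j).2 : ℝ) < 1

lemma cR_eq_edgePt {c : Fin n → G.E × unitInterval} (hc : IntCfg c) {j e x}
    (h : G.cR c j = G.edgePt e x) : c j = (e, x) := by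
  have h0 : (c j).2 ≠ 0 := fun h' => by have := (hc j).1; rw [h'] at this; simp at this
  have h1 : (c j).2 ≠ 1 := fun h' => by have := (hc j).2; rw [h'] at this; simp at this
  obtain ⟨he, hx⟩ := edgePt_inj h0 h1 h
  exact Prod.ext he hx

lemma cR_eq_dpt {c : Fin n → G.E × unitInterval} (hc : IntCfg c) {j d x}
    (h : G.cR c j = G.dpt d x) : c j = G.dpr d x :=
  cR_eq_edgePt hc h

lemma cR_update (c : Fin n → G.E × unitInterval) (i : Fin n) (p : G.E × unitInterval) :
    G.cR (Function.update c i p) = Function.update (G.cR c) i (G.edgePt p.1 p.2) := by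
  funext j
  by_cases hj : j = i
  · subst hj; simp [cR]
  · simp [cR, Function.update_of_ne hj]

/-- Crossing move, combinatorial form. -/
lemma ccross {c : Fin n → G.E × unitInterval} (hc : IntCfg c)
    (hinj : Function.Injective (G.cR c)) (i : Fin n) (d d' : G.E × Bool)
    (hvv : G.endV d = G.endV d') (a b : unitInterval) (hci : c i = G.dpr d a)
    (hb0 : 0 < (b:ℝ)) (hb1 : (b:ℝ) < 1)
    (hf1 : ∀ j, j ≠ i → ∀ x : unitInterval, (x:ℝ) ≤ (a:ℝ) → c j ≠ G.dpr d x)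
    (hf2 : ∀ j, j ≠ i → ∀ x : unitInterval, (x:ℝ) ≤ (b:ℝ) → c j ≠ G.dpr d' x) :
    ∃ hinj' : Function.Injective (G.cR (Function.update c i (G.dpr d' b))),
      IntCfg (Function.update c i (G.dpr d' b)) ∧
      Joined (⟨G.cR c, hinj⟩ : Conf G.Space n)
        ⟨G.cR (Function.update c i (G.dpr d' b)), hinj'⟩ := by
  obtain ⟨w, hw, hj⟩ := cross ⟨G.cR c, hinj⟩ i d d' hvv a b
    (by show G.cR c i = _; rw [cR]; rw [hci]; rfl)
    (fun j hj x hx h => hf1 j hj x hx (cR_eq_dpt hc h))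
    (fun j hj x hx h => hf2 j hj x hx (cR_eq_dpt hc h))
  have heq : w.1 = G.cR (Function.update c i (G.dpr d' b)) := by
    rw [hw, cR_update]; rfl
  have hint : IntCfg (Function.update c i (G.dpr d' b)) := by
    intro j
    by_cases hji : j = i
    · subst hji
      simp only [Function.update_self]
      constructor <;> rw [dpr_param] <;> split_ifs <;> linarith
    · rw [Function.update_of_ne hji]; exact hc j
  refine ⟨heq ▸ w.2, hint, ?_⟩
  have : w = ⟨G.cR (Function.update c i (G.dpr d' b)), heq ▸ w.2⟩ := Subtype.ext heq
  exact this ▸ hj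

/-- Choosing a parameter below a finite set of obstacles. -/
lemma exists_below (S : Finset ℝ) (u : ℝ) (hu : 0 < u) :
    ∃ ε : ℝ, 0 < ε ∧ ε < u ∧ ∀ a ∈ S, 0 < a → ε < a := by
  classical
  have hTne : (insert u (S.filter (fun a => 0 < a))).Nonempty :=
    ⟨u, Finset.mem_insert_self _ _⟩
  obtain ⟨m, hmem, hmin⟩ := (insert u (S.filter (fun a => 0 < a))).exists_min_image id hTne
  have hm0 : 0 < m := by
    rcases Finset.mem_insert.mp hmem with h | h
    · rw [h]; exact hu
    · exact (Finset.mem_filter.mp h).2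
  refine ⟨m / 2, by linarith, ?_, ?_⟩
  · have : m ≤ u := hmin u (Finset.mem_insert_self _ _)
    linarith
  · intro a ha ha0
    have : m ≤ a := hmin a (Finset.mem_insert_of_mem (Finset.mem_filter.mpr ⟨ha, ha0⟩))
    linarith

/-- Three distinct edge-ends at an essential vertex. -/
lemma exists_triple {v : G.V} (hv : 3 ≤ G.degree v) :
    ∃ d : Fin 3 → G.E × Bool, Function.Injective d ∧ ∀ t, G.endV (d t) = v := by
  classical
  have hcard : 3 ≤ Fintype.card ({e : G.E // G.s e = v} ⊕ {e : G.E // G.t e = v}) := by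
    rw [Fintype.card_sum]
    rw [degree, Nat.card_eq_fintype_card, Nat.card_eq_fintype_card] at hv
    exact hv
  obtain ⟨emb⟩ := Function.Embedding.nonempty_of_card_le (by simpa using hcard :
    Fintype.card (Fin 3) ≤ Fintype.card ({e : G.E // G.s e = v} ⊕ {e : G.E // G.t e = v}))
  set φ : ({e : G.E // G.s e = v} ⊕ {e : G.E // G.t e = v}) → G.E × Bool := fun q =>
    match q with
    | Sum.inl a => (a.1, false)
    | Sum.inr b => (b.1, true) with hφ
  have hφinj : Function.Injective φ := by
    rintro (⟨e1, h1⟩ | ⟨e1, h1⟩) (⟨e2, h2⟩ | ⟨e2, h2⟩) h <;>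
      simp [hφ, Prod.ext_iff] at h <;> try simp_all
  refine ⟨fun t => φ (emb t), hφinj.comp emb.injective, ?_⟩
  intro t
  rcases hq : emb t with (⟨e, he⟩ | ⟨e, he⟩) <;> simp [hφ, hq, endV, he]

end FinGraph
namespace FinGraph

open unitInterval Set

variable {G : FinGraph} {n : ℕ}

/-- Point `p` is parked on prong `t`. -/
def OnP (d : Fin 3 → G.E × Bool) (t : Fin 3) (p : G.E × unitInterval) : Prop :=
  ∃ x : unitInterval, 0 < (x:ℝ) ∧ (x:ℝ) < 1/2 ∧ p = G.dpr (d t) x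

/-- Point `p` is parked. -/
def Pk (d : Fin 3 → G.E × Bool) (p : G.E × unitInterval) : Prop := ∃ t, OnP d t p

lemma dpr_int {dd : G.E × Bool} {x : unitInterval} (h0 : 0 < ((G.dpr dd x).2:ℝ))
    (h1 : ((G.dpr dd x).2:ℝ) < 1) : 0 < (x:ℝ) ∧ (x:ℝ) < 1 := by
  rw [dpr_param] at h0 h1
  split_ifs at h0 h1 <;> constructor <;> linarith

lemma onP_dpm {d : Fin 3 → G.E × Bool} {t : Fin 3} {p : G.E × unitInterval}
    (h : OnP d t p) :
    p.1 = (d t).1 ∧ 0 < (G.dpm (d t) p : ℝ) ∧ (G.dpm (d t) p : ℝ) < 1/2 ∧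
      p = G.dpr (d t) (G.dpm (d t) p) := by
  obtain ⟨x, hx0, hx1, rfl⟩ := h
  rw [dpm_dpr]
  exact ⟨rfl, hx0, hx1, rfl⟩

lemma not_onP_of_onP {d : Fin 3 → G.E × Bool} (hd : Function.Injective d)
    {t t' : Fin 3} (htt' : t ≠ t') {p : G.E × unitInterval}
    (h : OnP d t' p) : ¬ OnP d t p := by
  rintro ⟨x, hx0, hx1, rfl⟩
  obtain ⟨y, hy0, hy1, hy⟩ := h
  exact dpr_ne_of_ne (fun he => htt' (hd he)) hx1 hy1 hy

/-- The parked tokens of a configuration on prong `t`. -/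
noncomputable def Pt (d : Fin 3 → G.E × Bool) (c : Fin n → G.E × unitInterval) (t : Fin 3) :
    Finset (Fin n) := by
  classical exact Finset.univ.filter (fun j => OnP d t (c j))

lemma mem_Pt {d : Fin 3 → G.E × Bool} {c : Fin n → G.E × unitInterval} {t : Fin 3}
    {j : Fin n} : j ∈ Pt d c t ↔ OnP d t (c j) := by
  classical
  simp [Pt]

/-- Pop the shallowest token of prong `t` over to prong `t'`. -/
lemma pop {d : Fin 3 → G.E × Bool} (hd : Function.Injective d)
    (hdv : ∀ t, G.endV (d t) = G.endV (d 0))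
    {c : Fin n → G.E × unitInterval} (hc : IntCfg c) (hinj : Function.Injective (G.cR c))
    (t t' : Fin 3) (htt' : t ≠ t') (hne : (Pt d c t).Nonempty) :
    ∃ (i : Fin n) (b : unitInterval),
      OnP d t (c i) ∧
      (∀ j, OnP d t (c j) → (G.dpm (d t) (c i) : ℝ) ≤ (G.dpm (d t) (c j) : ℝ)) ∧
      OnP d t' (G.dpr (d t') b) ∧
      IntCfg (Function.update c i (G.dpr (d t') b)) ∧
      ∃ hinj' : Function.Injective (G.cR (Function.update c i (G.dpr (d t') b))),
        Joined (⟨G.cR c, hinj⟩ : Conf G.Space n)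
          ⟨G.cR (Function.update c i (G.dpr (d t') b)), hinj'⟩ := by
  classical
  obtain ⟨i, hiPt, himin⟩ := (Pt d c t).exists_min_image
    (fun j => (G.dpm (d t) (c j) : ℝ)) hne
  have hi := mem_Pt.mp hiPt
  obtain ⟨hie, hi0, hi2, hieq⟩ := onP_dpm (G := G) hi
  -- choose the landing parameter
  obtain ⟨ε, hε0, hε2, hεlt⟩ := exists_below
    ((Finset.univ : Finset (Fin n)).image (fun j => (G.dpm (d t') (c j) : ℝ))) (1/2)
    (by norm_num)
  set b : unitInterval := ⟨ε, le_of_lt hε0, by linarith⟩ with hb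
  have hb0 : (0:ℝ) < (b:ℝ) := hε0
  have hb2 : (b:ℝ) < 1/2 := hε2
  have honb : OnP d t' (G.dpr (d t') b) := ⟨b, hb0, hb2, rfl⟩
  have hf1 : ∀ j, j ≠ i → ∀ x : unitInterval, (x:ℝ) ≤ ((G.dpm (d t) (c i)):ℝ) →
      c j ≠ G.dpr (d t) x := by
    intro j hj x hx hEq
    have hint := hc j
    rw [hEq] at hint
    obtain ⟨hx0, hx1⟩ := dpr_int (G := G) hint.1 hint.2
    have honj : OnP d t (c j) := ⟨x, hx0, by linarith, hEq⟩
    have := himin j (mem_Pt.mpr honj)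
    have hxe : (G.dpm (d t) (c j) : ℝ) = (x:ℝ) := by rw [hEq, dpm_dpr]
    have : c j = c i := by
      rw [hEq, hieq]
      congr 1
      apply Subtype.ext
      rw [hxe] at this
      show (_ : ℝ) = _
      linarith [hx, this]
    exact hj (hinj (by rw [cR, cR, this]))
  have hf2 : ∀ j, j ≠ i → ∀ x : unitInterval, (x:ℝ) ≤ (b:ℝ) →
      c j ≠ G.dpr (d t') x := by
    intro j hj x hx hEq
    have hint := hc j
    rw [hEq] at hint
    obtain ⟨hx0, hx1⟩ := dpr_int (G := G) hint.1 hint.2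
    have hxe : (G.dpm (d t') (c j) : ℝ) = (x:ℝ) := by rw [hEq, dpm_dpr]
    have := hεlt _ (Finset.mem_image_of_mem _ (Finset.mem_univ j)) (by rw [hxe]; exact hx0)
    rw [hxe] at this
    linarith
  obtain ⟨hinj', hint', hjoin⟩ := ccross hc hinj i (d t) (d t')
    ((hdv t).trans (hdv t').symm) _ b hieq hb0 (by linarith) hf1 hf2
  exact ⟨i, b, hi, fun j hj => himin j (mem_Pt.mpr hj), honb, hint', hinj', hjoin⟩

end FinGraph
namespace FinGraph

open unitInterval Set

variable {G : FinGraph} {n : ℕ}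

open Classical in
/-- Clear all tokens parked on prongs lying on the edge `f`, moving them to prong `t₀`. -/
lemma clear_edge {d : Fin 3 → G.E × Bool} (hd : Function.Injective d)
    (hdv : ∀ t, G.endV (d t) = G.endV (d 0)) (f : G.E) (t₀ : Fin 3)
    (ht₀ : (d t₀).1 ≠ f) :
    ∀ (K : ℕ) (c : Fin n → G.E × unitInterval) (hc : IntCfg c)
      (hinj : Function.Injective (G.cR c)),
      (Finset.univ.filter (fun j => ∃ t, (d t).1 = f ∧ OnP d t (c j))).card ≤ K →
      ∃ c', IntCfg c' ∧ (∀ j t, (d t).1 = f → ¬OnP d t (c' j)) ∧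
        (∀ j, c' j = c j ∨ (Pk d (c j) ∧ OnP d t₀ (c' j))) ∧
        ∃ hinj' : Function.Injective (G.cR c'),
          Joined (⟨G.cR c, hinj⟩ : Conf G.Space n) ⟨G.cR c', hinj'⟩ := by
  classical
  intro K
  induction K with
  | zero =>
    intro c hc hinj hcard
    refine ⟨c, hc, ?_, fun j => Or.inl rfl, hinj, Joined.refl _⟩
    intro j t htf hOn
    have : j ∈ Finset.univ.filter (fun j => ∃ t, (d t).1 = f ∧ OnP d t (c j)) := by
      simp only [Finset.mem_filter, Finset.mem_univ, true_and]
      exact ⟨t, htf, hOn⟩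
    have := Finset.card_pos.mpr ⟨j, this⟩
    omega
  | succ K ih =>
    intro c hc hinj hcard
    by_cases hemp : (Finset.univ.filter (fun j => ∃ t, (d t).1 = f ∧ OnP d t (c j))) = ∅
    · refine ⟨c, hc, ?_, fun j => Or.inl rfl, hinj, Joined.refl _⟩
      intro j t htf hOn
      have : j ∈ Finset.univ.filter (fun j => ∃ t, (d t).1 = f ∧ OnP d t (c j)) := by
        simp only [Finset.mem_filter, Finset.mem_univ, true_and]
        exact ⟨t, htf, hOn⟩
      rw [hemp] at this
      exact absurd this (Finset.notMem_empty _)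
    · obtain ⟨j₀, hj₀⟩ := Finset.nonempty_iff_ne_empty.mpr hemp
      simp only [Finset.mem_filter, Finset.mem_univ, true_and] at hj₀
      obtain ⟨t, htf, hOn⟩ := hj₀
      have htt₀ : t ≠ t₀ := fun h => ht₀ (h ▸ htf)
      obtain ⟨i, b, hiOn, himin, hbOn, hint1, hinj1, hjoin1⟩ :=
        pop hd hdv hc hinj t t₀ htt₀ ⟨j₀, mem_Pt.mpr hOn⟩
      set c1 := Function.update c i (G.dpr (d t₀) b) with hc1
      have hstep : ∀ j, c1 j = c j ∨ (Pk d (c j) ∧ OnP d t₀ (c1 j)) := by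
        intro j
        by_cases hji : j = i
        · subst hji
          exact Or.inr ⟨⟨t, hiOn⟩, by rw [hc1, Function.update_self]; exact hbOn⟩
        · exact Or.inl (Function.update_of_ne hji _ _)
      have hsub : (Finset.univ.filter (fun j => ∃ t, (d t).1 = f ∧ OnP d t (c1 j))) ⊆
          (Finset.univ.filter (fun j => ∃ t, (d t).1 = f ∧ OnP d t (c j))).erase i := by
        intro j hj
        simp only [Finset.mem_filter, Finset.mem_univ, true_and] at hj
        obtain ⟨t2, ht2f, hOn2⟩ := hj
        have hji : j ≠ i := by
          intro h
          subst h
          rw [hc1, Function.update_self] at hOn2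
          have ht2t₀ : t2 ≠ t₀ := fun h => ht₀ (h ▸ ht2f)
          exact not_onP_of_onP hd ht2t₀ hbOn hOn2
        rw [Finset.mem_erase]
        refine ⟨hji, ?_⟩
        simp only [Finset.mem_filter, Finset.mem_univ, true_and]
        rw [hc1, Function.update_of_ne hji] at hOn2
        exact ⟨t2, ht2f, hOn2⟩
      have hiMem : i ∈ (Finset.univ.filter (fun j => ∃ t, (d t).1 = f ∧ OnP d t (c j))) := by
        simp only [Finset.mem_filter, Finset.mem_univ, true_and]
        exact ⟨t, htf, hiOn⟩
      have hcard1 : (Finset.univ.filter (fun j => ∃ t, (d t).1 = f ∧ OnP d t (c1 j))).card ≤ K := by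
        have h1 := Finset.card_le_card hsub
        have h2 := Finset.card_erase_lt_of_mem hiMem
        omega
      obtain ⟨c', hc', hclear, hpres, hinj', hjoin'⟩ := ih c1 hint1 hinj1 hcard1
      refine ⟨c', hc', hclear, ?_, hinj', hjoin1.trans hjoin'⟩
      intro j
      rcases hpres j with h | ⟨hpk, hOn'⟩
      · rcases hstep j with h2 | ⟨hpk2, hOn2⟩
        · exact Or.inl (h.trans h2)
        · exact Or.inr ⟨hpk2, h ▸ hOn2⟩
      · rcases hstep j with h2 | ⟨hpk2, hOn2⟩
        · rw [h2] at hpk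
          exact Or.inr ⟨hpk, hOn'⟩
        · exact Or.inr ⟨hpk2, hOn'⟩

variable (v : G.V)

open Classical in
/-- Cost of a token. -/
noncomputable def cost (d : Fin 3 → G.E × Bool) (p : G.E × unitInterval) : ℕ :=
  if Pk d p then 0 else 1 + G.elvl v p.1

/-- Total potential of a configuration. -/
noncomputable def phi (d : Fin 3 → G.E × Bool) (c : Fin n → G.E × unitInterval) : ℕ :=
  ∑ j, cost v d (c j)

lemma cost_parked {d : Fin 3 → G.E × Bool} {p} (h : Pk d p) : cost (G := G) v d p = 0 :=
  if_pos h

lemma cost_unparked {d : Fin 3 → G.E × Bool} {p} (h : ¬Pk d p) :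
    cost (G := G) v d p = 1 + G.elvl v p.1 := if_neg h

lemma phi_update {d : Fin 3 → G.E × Bool} (c : Fin n → G.E × unitInterval) (i : Fin n)
    (p : G.E × unitInterval) :
    phi v d (Function.update c i p) + cost v d (c i) = phi v d c + cost v d p := by
  classical
  rw [phi, phi]
  rw [Finset.sum_congr rfl
    (fun j _ => Function.apply_update (fun _ q => cost v d q) c i p j)]
  rw [Finset.sum_update_of_mem (Finset.mem_univ i)]
  rw [← Finset.sum_erase_add _ (fun a => cost v d (c a)) (Finset.mem_univ i),
    Finset.sdiff_singleton_eq_erase]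
  ring

variable [ConnectedSpace G.Space]

lemma lvl_self : G.lvl v v = 0 :=
  Nat.le_zero.mp (G.lvl_le v (show G.chain v 0 v from rfl))

lemma elvl_end_zero {d : Fin 3 → G.E × Bool} (hdv : ∀ t, G.endV (d t) = v) (t : Fin 3) :
    G.elvl v (d t).1 = 0 := by
  have := hdv t
  rw [endV] at this
  split_ifs at this
  · rw [elvl]
    have : G.lvl v (G.t (d t).1) = 0 := by rw [this]; exact lvl_self v
    omega
  · rw [elvl]
    have : G.lvl v (G.s (d t).1) = 0 := by rw [this]; exact lvl_self v
    omega

lemma parked_edge_elvl {d : Fin 3 → G.E × Bool} (hdv : ∀ t, G.endV (d t) = v)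
    {p : G.E × unitInterval} (h : Pk d p) : G.elvl v p.1 = 0 := by
  obtain ⟨t, ht⟩ := h
  obtain ⟨he, _, _, _⟩ := onP_dpm (G := G) ht
  rw [he]
  exact elvl_end_zero v hdv t

/-- There is a prong avoiding any given edge. -/
lemma exists_avoid {d : Fin 3 → G.E × Bool} (hd : Function.Injective d) (f : G.E) :
    ∃ t, (d t).1 ≠ f := by
  by_contra h
  push_neg at h
  have hbinj : Function.Injective (fun t : Fin 3 => (d t).2) := by
    intro t t' he
    exact hd (Prod.ext ((h t).trans (h t').symm) he)
  have := Fintype.card_le_of_injective _ hbinj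
  simp at this

end FinGraph
namespace FinGraph

open unitInterval Set

variable {G : FinGraph} {n : ℕ}

/-- Route the shallowest token on edge `f` (w.r.t. the end `d0`) across the vertex onto
the edge-end `d1`, at a fresh small parameter. -/
lemma route_out {c : Fin n → G.E × unitInterval} (hc : IntCfg c)
    (hinj : Function.Injective (G.cR c)) (f : G.E) (d0 d1 : G.E × Bool)
    (hd0 : d0.1 = f) (hvv : G.endV d0 = G.endV d1) {i : Fin n} (hi : (c i).1 = f) :
    ∃ (i' : Fin n) (b : unitInterval), (c i').1 = f ∧ 0 < (b:ℝ) ∧ (b:ℝ) < 1/2 ∧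
      IntCfg (Function.update c i' (G.dpr d1 b)) ∧
      ∃ hinj' : Function.Injective (G.cR (Function.update c i' (G.dpr d1 b))),
        Joined (⟨G.cR c, hinj⟩ : Conf G.Space n)
          ⟨G.cR (Function.update c i' (G.dpr d1 b)), hinj'⟩ := by
  classical
  have hne : (Finset.univ.filter (fun j => (c j).1 = f)).Nonempty :=
    ⟨i, by simp [hi]⟩
  obtain ⟨i', hi'mem, hi'min⟩ := (Finset.univ.filter (fun j => (c j).1 = f)).exists_min_image
    (fun j => (G.dpm d0 (c j) : ℝ)) hne
  have hi'f : (c i').1 = f := (Finset.mem_filter.mp hi'mem).2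
  have hci' : c i' = G.dpr d0 (G.dpm d0 (c i')) := (dpr_dpm (hi'f.trans hd0.symm)).symm
  obtain ⟨ε, hε0, hε2, hεlt⟩ := exists_below
    ((Finset.univ : Finset (Fin n)).image (fun j => (G.dpm d1 (c j) : ℝ))) (1/2)
    (by norm_num)
  set b : unitInterval := ⟨ε, le_of_lt hε0, by linarith⟩ with hbdef
  have hf1 : ∀ j, j ≠ i' → ∀ x : unitInterval, (x:ℝ) ≤ ((G.dpm d0 (c i')):ℝ) →
      c j ≠ G.dpr d0 x := by
    intro j hj x hx hEq
    have hint := hc j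
    rw [hEq] at hint
    obtain ⟨hx0, hx1⟩ := dpr_int (G := G) hint.1 hint.2
    have hjf : (c j).1 = f := by rw [hEq]; exact hd0
    have hmin := hi'min j (by simp [hjf])
    have hxe : (G.dpm d0 (c j) : ℝ) = (x:ℝ) := by rw [hEq, dpm_dpr]
    have hcc : c j = c i' := by
      rw [hEq, hci']
      congr 1
      apply Subtype.ext
      rw [hxe] at hmin
      show (_ : ℝ) = _
      linarith
    exact hj (hinj (by rw [cR, cR, hcc]))
  have hf2 : ∀ j, j ≠ i' → ∀ x : unitInterval, (x:ℝ) ≤ (b:ℝ) →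
      c j ≠ G.dpr d1 x := by
    intro j hj x hx hEq
    have hint := hc j
    rw [hEq] at hint
    obtain ⟨hx0, hx1⟩ := dpr_int (G := G) hint.1 hint.2
    have hxe : (G.dpm d1 (c j) : ℝ) = (x:ℝ) := by rw [hEq, dpm_dpr]
    have := hεlt _ (Finset.mem_image_of_mem _ (Finset.mem_univ j)) (by rw [hxe]; exact hx0)
    rw [hxe] at this
    have : ε < (x:ℝ) := this
    have hbx : (b:ℝ) = ε := rfl
    rw [hbx] at hx
    linarith
  obtain ⟨hinj', hint', hjoin⟩ := ccross hc hinj i' d0 d1 hvv _ b hci' hε0 (by linarith) hf1 hf2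
  exact ⟨i', b, hi'f, hε0, hε2, hint', hinj', hjoin⟩

variable (v : G.V) [ConnectedSpace G.Space]

/-- Park one unparked token on an edge touching `v`. -/
lemma park {d : Fin 3 → G.E × Bool} (hd : Function.Injective d)
    (hdv : ∀ t, G.endV (d t) = v) {c : Fin n → G.E × unitInterval} (hc : IntCfg c)
    (hinj : Function.Injective (G.cR c)) {i : Fin n} (hnp : ¬ Pk d (c i))
    (h0 : G.elvl v (c i).1 = 0) :
    ∃ c', IntCfg c' ∧ phi v d c' < phi v d c ∧
      ∃ hinj' : Function.Injective (G.cR c'),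
        Joined (⟨G.cR c, hinj⟩ : Conf G.Space n) ⟨G.cR c', hinj'⟩ := by
  classical
  set f := (c i).1 with hf
  obtain ⟨t₀, ht₀⟩ := exists_avoid (G := G) hd f
  have hdv' : ∀ t, G.endV (d t) = G.endV (d 0) := fun t => (hdv t).trans (hdv 0).symm
  obtain ⟨c1, hc1, hclear, hpres, hinj1, hjoin1⟩ := clear_edge hd hdv' f t₀ ht₀
    (Finset.univ.filter (fun j => ∃ t, (d t).1 = f ∧ OnP d t (c j))).card c hc hinj le_rfl
  have hc1i : c1 i = c i := by
    rcases hpres i with h | ⟨hpk, _⟩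
    · exact h
    · exact absurd hpk hnp
  -- the end of `f` at `v`
  have hor : G.s f = v ∨ G.t f = v := by
    rw [elvl] at h0
    rcases Nat.min_eq_zero_iff.mp h0 with h | h
    · exact Or.inl (G.lvl_eq_zero v h)
    · exact Or.inr (G.lvl_eq_zero v h)
  have hd0 : ∃ b0 : Bool, G.endV (f, b0) = v := by
    rcases hor with h | h
    · exact ⟨false, h⟩
    · exact ⟨true, h⟩
  obtain ⟨b0, hb0v⟩ := hd0
  obtain ⟨i', b, hi'f, hbpos, hblt, hint2, hinj2, hjoin2⟩ := route_out hc1 hinj1 f (f, b0)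
    (d t₀) rfl (hb0v.trans (hdv t₀).symm) (show (c1 i).1 = f by rw [hc1i])
  set c2 := Function.update c1 i' (G.dpr (d t₀) b) with hc2
  have hnp1 : ¬ Pk d (c1 i') := by
    rintro ⟨t, hOn⟩
    have he := (onP_dpm (G := G) hOn).1
    exact hclear i' t (by rw [← he, hi'f]) hOn
  have hcost2 : cost v d (G.dpr (d t₀) b) = 0 :=
    cost_parked v ⟨t₀, b, hbpos, hblt, rfl⟩
  have hcost1 : cost v d (c1 i') = 1 := by
    rw [cost_unparked v hnp1, hi'f, h0]
  have hphi12 := phi_update (d := d) v c1 i' (G.dpr (d t₀) b)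
  have hphi1c : phi v d c1 ≤ phi v d c := by
    apply Finset.sum_le_sum
    intro j _
    rcases hpres j with h | ⟨hpk, hOn⟩
    · rw [h]
    · rw [cost_parked v ⟨t₀, hOn⟩, cost_parked v hpk]
  refine ⟨c2, hint2, ?_, hinj2, hjoin1.trans hjoin2⟩
  rw [hcost1, hcost2] at hphi12
  rw [hc2]
  omega

/-- Move one unparked token on a far edge strictly closer to `v`. -/
lemma transfer {d : Fin 3 → G.E × Bool}
    (hdv : ∀ t, G.endV (d t) = v) {c : Fin n → G.E × unitInterval} (hc : IntCfg c)
    (hinj : Function.Injective (G.cR c)) {i : Fin n} (hnp : ¬ Pk d (c i))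
    (h0 : G.elvl v (c i).1 ≠ 0) :
    ∃ c', IntCfg c' ∧ phi v d c' < phi v d c ∧
      ∃ hinj' : Function.Injective (G.cR c'),
        Joined (⟨G.cR c, hinj⟩ : Conf G.Space n) ⟨G.cR c', hinj'⟩ := by
  classical
  set f := (c i).1 with hf
  obtain ⟨b0, d1, hvv', hlvl, hlt⟩ := G.transfer_data v h0
  obtain ⟨i', b, hi'f, hbpos, hblt, hint2, hinj2, hjoin2⟩ := route_out hc hinj f (f, b0)
    d1 rfl hvv' (show (c i).1 = f from rfl)
  set c2 := Function.update c i' (G.dpr d1 b) with hc2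
  have hnpi' : ¬ Pk d (c i') := by
    intro hpk
    have := parked_edge_elvl v hdv hpk
    rw [hi'f] at this
    exact h0 this
  have hcosti' : cost v d (c i') = 1 + G.elvl v f := by
    rw [cost_unparked v hnpi', hi'f]
  have hcostb : cost v d (G.dpr d1 b) ≤ 1 + G.elvl v d1.1 := by
    by_cases hpk : Pk d (G.dpr d1 b)
    · rw [cost_parked v hpk]; omega
    · rw [cost_unparked v hpk]
      simp [dpr]
  have hphi := phi_update (d := d) v c i' (G.dpr d1 b)
  refine ⟨c2, hint2, ?_, hinj2, hjoin2⟩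
  rw [hcosti'] at hphi
  rw [hc2]
  omega

/-- Phase 1: every interior configuration can be fully parked. -/
lemma phase1 {d : Fin 3 → G.E × Bool} (hd : Function.Injective d)
    (hdv : ∀ t, G.endV (d t) = v) :
    ∀ (N : ℕ) (c : Fin n → G.E × unitInterval) (hc : IntCfg c)
      (hinj : Function.Injective (G.cR c)), phi v d c ≤ N →
      ∃ c', IntCfg c' ∧ (∀ j, Pk d (c' j)) ∧
        ∃ hinj' : Function.Injective (G.cR c'),
          Joined (⟨G.cR c, hinj⟩ : Conf G.Space n) ⟨G.cR c', hinj'⟩ := by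
  classical
  intro N
  induction N with
  | zero =>
    intro c hc hinj hphi
    refine ⟨c, hc, ?_, hinj, Joined.refl _⟩
    intro j
    by_contra hnp
    have h1 : 1 ≤ cost v d (c j) := by rw [cost_unparked v hnp]; omega
    have h2 : cost v d (c j) ≤ phi v d c := by
      rw [phi]
      exact Finset.single_le_sum (f := fun a => cost v d (c a))
        (fun _ _ => Nat.zero_le _) (Finset.mem_univ j)
    omega
  | succ K ih =>
    intro c hc hinj hphi
    by_cases hall : ∀ j, Pk d (c j)
    · exact ⟨c, hc, hall, hinj, Joined.refl _⟩
    · push_neg at hall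
      obtain ⟨i, hnp⟩ := hall
      by_cases h0 : G.elvl v (c i).1 = 0
      · obtain ⟨c2, hc2, hphi2, hinj2, hjoin2⟩ := park v hd hdv hc hinj hnp h0
        obtain ⟨c', hc', hall', hinj', hjoin'⟩ := ih c2 hc2 hinj2 (by omega)
        exact ⟨c', hc', hall', hinj', hjoin2.trans hjoin'⟩
      · obtain ⟨c2, hc2, hphi2, hinj2, hjoin2⟩ := transfer v hdv hc hinj hnp h0
        obtain ⟨c', hc', hall', hinj', hjoin'⟩ := ih c2 hc2 hinj2 (by omega)
        exact ⟨c', hc', hall', hinj', hjoin2.trans hjoin'⟩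

end FinGraph
namespace FinGraph

open unitInterval Set

variable {G : FinGraph} {n : ℕ}

/-- Canonical parameters. -/
noncomputable def xi (n : ℕ) (j : Fin n) : unitInterval :=
  ⟨(j.1 + 1) / (2 * n + 2), by
    constructor
    · positivity
    · rw [div_le_one (by positivity)]
      have : (j.1 : ℝ) < n := by exact_mod_cast j.2
      linarith⟩

lemma xi_pos (j : Fin n) : 0 < (xi n j : ℝ) := by
  have : (0:ℝ) < (j.1 + 1) := by positivity
  exact div_pos this (by positivity)

lemma xi_lt (j : Fin n) : (xi n j : ℝ) < 1/2 := by
  rw [show ((xi n j : ℝ)) = (j.1 + 1) / (2 * n + 2) from rfl]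
  rw [div_lt_iff₀ (by positivity)]
  have : (j.1 : ℝ) < n := by exact_mod_cast j.2
  linarith

lemma xi_le_iff {j k : Fin n} : (xi n j : ℝ) ≤ (xi n k : ℝ) ↔ j.1 ≤ k.1 := by
  rw [show ((xi n j : ℝ)) = (j.1 + 1) / (2 * n + 2) from rfl,
    show ((xi n k : ℝ)) = (k.1 + 1) / (2 * n + 2) from rfl]
  rw [div_le_div_iff_of_pos_right (by positivity : (0:ℝ) < 2 * n + 2)]
  constructor
  · intro h
    have : (j.1 : ℝ) ≤ k.1 := by linarith
    exact_mod_cast this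
  · intro h
    have : (j.1 : ℝ) ≤ k.1 := by exact_mod_cast h
    linarith

lemma xi_inj : Function.Injective (xi n) := by
  intro j k h
  have h1 := xi_le_iff (n := n) (j := j) (k := k)
  have h2 := xi_le_iff (n := n) (j := k) (k := j)
  rw [h] at h1 h2
  exact Fin.ext (le_antisymm (h1.mp le_rfl) (h2.mp le_rfl))

/-- The canonical configuration. -/
noncomputable def cstar (d : Fin 3 → G.E × Bool) : Fin n → G.E × unitInterval :=
  fun j => G.dpr (d 0) (xi n j)

lemma cstar_int (d : Fin 3 → G.E × Bool) : IntCfg (cstar (G := G) (n := n) d) := by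
  intro j
  rw [cstar, dpr_param]
  have h1 := xi_pos j
  have h2 := xi_lt j
  split_ifs <;> constructor <;> linarith

lemma cstar_inj (d : Fin 3 → G.E × Bool) :
    Function.Injective (G.cR (cstar (G := G) (n := n) d)) := by
  intro j k h
  have hp : (cstar (G := G) (n := n) d) j = (cstar (G := G) (n := n) d) k :=
    cR_eq_edgePt (cstar_int d) (j := j)
      (e := (cstar (G := G) (n := n) d k).1) (x := (cstar (G := G) (n := n) d k).2)
      (by rw [h]; rfl)
  apply xi_inj
  rw [cstar, cstar] at hp
  have := congrArg Prod.snd hp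
  rw [dpr, dpr] at this
  split_ifs at this
  · have := congrArg unitInterval.symm this
    simpa using this
  · exact this

open Classical in
/-- Make the token `k` shallowest on its prong by popping blockers to the other
auxiliary prong. -/
lemma deblock {d : Fin 3 → G.E × Bool} (hd : Function.Injective d)
    (hdv : ∀ t, G.endV (d t) = G.endV (d 0)) (t t'' : Fin 3) (htt'' : t'' ≠ t) :
    ∀ (K : ℕ) (c : Fin n → G.E × unitInterval) (hc : IntCfg c)
      (hinj : Function.Injective (G.cR c)) (k : Fin n), OnP d t (c k) →
      (Finset.univ.filter (fun j => OnP d t (c j) ∧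
        (G.dpm (d t) (c j) : ℝ) < (G.dpm (d t) (c k) : ℝ))).card ≤ K →
      ∃ c', IntCfg c' ∧ c' k = c k ∧
        (∀ j, c' j = c j ∨ (j ≠ k ∧ OnP d t (c j) ∧ OnP d t'' (c' j))) ∧
        (∀ j, OnP d t (c' j) → (G.dpm (d t) (c' k) : ℝ) ≤ (G.dpm (d t) (c' j) : ℝ)) ∧
        ∃ hinj' : Function.Injective (G.cR c'),
          Joined (⟨G.cR c, hinj⟩ : Conf G.Space n) ⟨G.cR c', hinj'⟩ := by
  classical
  intro K
  induction K with
  | zero =>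
    intro c hc hinj k hOn hcard
    refine ⟨c, hc, rfl, fun j => Or.inl rfl, ?_, hinj, Joined.refl _⟩
    intro j hOnj
    by_contra hlt
    push_neg at hlt
    have hmem : j ∈ Finset.univ.filter (fun j => OnP d t (c j) ∧
        (G.dpm (d t) (c j) : ℝ) < (G.dpm (d t) (c k) : ℝ)) := by
      simp only [Finset.mem_filter, Finset.mem_univ, true_and]
      exact ⟨hOnj, hlt⟩
    have := Finset.card_pos.mpr ⟨j, hmem⟩
    omega
  | succ K ih =>
    intro c hc hinj k hOn hcard
    by_cases hemp : (Finset.univ.filter (fun j => OnP d t (c j) ∧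
        (G.dpm (d t) (c j) : ℝ) < (G.dpm (d t) (c k) : ℝ))) = ∅
    · refine ⟨c, hc, rfl, fun j => Or.inl rfl, ?_, hinj, Joined.refl _⟩
      intro j hOnj
      by_contra hlt
      push_neg at hlt
      have hmem : j ∈ (∅ : Finset (Fin n)) := by
        rw [← hemp]
        simp only [Finset.mem_filter, Finset.mem_univ, true_and]
        exact ⟨hOnj, hlt⟩
      exact absurd hmem (Finset.notMem_empty _)
    · obtain ⟨j₀, hj₀⟩ := Finset.nonempty_iff_ne_empty.mpr hemp
      simp only [Finset.mem_filter, Finset.mem_univ, true_and] at hj₀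
      obtain ⟨hj₀On, hj₀lt⟩ := hj₀
      obtain ⟨i, b, hiOn, himin, hbOn, hint1, hinj1, hjoin1⟩ :=
        pop hd hdv hc hinj t t'' (Ne.symm htt'') ⟨j₀, mem_Pt.mpr hj₀On⟩
      set c1 := Function.update c i (G.dpr (d t'') b) with hc1
      have hik : i ≠ k := by
        intro h
        have h1 := himin j₀ hj₀On
        rw [h] at h1
        linarith
      have hc1k : c1 k = c k := Function.update_of_ne (Ne.symm hik) _ _
      have hstep : ∀ j, c1 j = c j ∨ (j ≠ k ∧ OnP d t (c j) ∧ OnP d t'' (c1 j)) := by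
        intro j
        by_cases hji : j = i
        · subst hji
          exact Or.inr ⟨hik, hiOn, by rw [hc1, Function.update_self]; exact hbOn⟩
        · exact Or.inl (Function.update_of_ne hji _ _)
      have hOn1 : OnP d t (c1 k) := by rw [hc1k]; exact hOn
      have hsub : (Finset.univ.filter (fun j => OnP d t (c1 j) ∧
          (G.dpm (d t) (c1 j) : ℝ) < (G.dpm (d t) (c1 k) : ℝ))) ⊆
          (Finset.univ.filter (fun j => OnP d t (c j) ∧
          (G.dpm (d t) (c j) : ℝ) < (G.dpm (d t) (c k) : ℝ))).erase i := by
        intro j hj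
        simp only [Finset.mem_filter, Finset.mem_univ, true_and] at hj
        obtain ⟨hOnj, hltj⟩ := hj
        have hji : j ≠ i := by
          intro h
          subst h
          rw [hc1, Function.update_self] at hOnj
          exact not_onP_of_onP hd (Ne.symm htt'') hbOn hOnj
        rw [Finset.mem_erase]
        refine ⟨hji, ?_⟩
        simp only [Finset.mem_filter, Finset.mem_univ, true_and]
        rw [hc1, Function.update_of_ne hji] at hOnj
        rw [hc1, Function.update_of_ne hji, Function.update_of_ne (Ne.symm hik)] at hltj
        exact ⟨hOnj, hltj⟩
      have hiMem : i ∈ (Finset.univ.filter (fun j => OnP d t (c j) ∧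
          (G.dpm (d t) (c j) : ℝ) < (G.dpm (d t) (c k) : ℝ))) := by
        simp only [Finset.mem_filter, Finset.mem_univ, true_and]
        exact ⟨hiOn, lt_of_le_of_lt (himin j₀ hj₀On) hj₀lt⟩
      have hcard1 : (Finset.univ.filter (fun j => OnP d t (c1 j) ∧
          (G.dpm (d t) (c1 j) : ℝ) < (G.dpm (d t) (c1 k) : ℝ))).card ≤ K := by
        have h1 := Finset.card_le_card hsub
        have h2 := Finset.card_erase_lt_of_mem hiMem
        omega
      obtain ⟨c', hc', hck, hmoves, hmin, hinj', hjoin'⟩ := ih c1 hint1 hinj1 k hOn1 hcard1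
      refine ⟨c', hc', hck.trans hc1k, ?_, hmin, hinj', hjoin1.trans hjoin'⟩
      intro j
      rcases hmoves j with h | ⟨hjk, hpk, hOn'⟩
      · rcases hstep j with h2 | ⟨hjk2, hpk2, hOn2⟩
        · exact Or.inl (h.trans h2)
        · exact Or.inr ⟨hjk2, hpk2, h ▸ hOn2⟩
      · rcases hstep j with h2 | ⟨hjk2, hpk2, hOn2⟩
        · rw [h2] at hpk
          exact Or.inr ⟨hjk, hpk, hOn'⟩
        · exact absurd hpk (not_onP_of_onP hd (Ne.symm htt'') hOn2)

end FinGraph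
namespace FinGraph

open unitInterval Set

variable {G : FinGraph} {n : ℕ}

/-- Phase 2: sort a fully-parked configuration into the canonical one. -/
lemma phase2 {d : Fin 3 → G.E × Bool} (hd : Function.Injective d)
    (hdv : ∀ t, G.endV (d t) = G.endV (d 0)) :
    ∀ (k : ℕ), k ≤ n → ∀ (c : Fin n → G.E × unitInterval) (hc : IntCfg c)
      (hinj : Function.Injective (G.cR c)),
      (∀ j : Fin n, k ≤ j.1 → c j = G.dpr (d 0) (xi n j)) →
      (∀ j : Fin n, j.1 < k → Pk d (c j) ∧ ¬ OnP d 0 (c j)) →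
      Joined (⟨G.cR c, hinj⟩ : Conf G.Space n) ⟨G.cR (cstar d), cstar_inj d⟩ := by
  classical
  intro k
  induction k with
  | zero =>
    intro _ c hc hinj hfin _
    have hcc : c = cstar d := funext (fun j => hfin j (Nat.zero_le _))
    subst hcc
    exact Joined.refl _
  | succ k ih =>
    intro hk1 c hc hinj hfin hlow
    set kf : Fin n := ⟨k, by omega⟩ with hkf
    obtain ⟨⟨t, hOnt⟩, hno0⟩ := hlow kf (by simp [hkf])
    have ht0 : t ≠ 0 := fun h => hno0 (h ▸ hOnt)
    set t'' : Fin 3 := if t = 1 then 2 else 1 with ht''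
    have ht''0 : t'' ≠ 0 := by
      rw [ht'']; split_ifs <;> decide
    have htt'' : t'' ≠ t := by
      rw [ht'']
      by_cases h : t = 1
      · rw [if_pos h, h]; decide
      · rw [if_neg h]; exact fun hh => h hh.symm
    obtain ⟨c1, hc1, hc1k, hmoves, hmin, hinj1, hjoin1⟩ :=
      deblock hd hdv t t'' htt''
        (Finset.univ.filter (fun j => OnP d t (c j) ∧
          (G.dpm (d t) (c j) : ℝ) < (G.dpm (d t) (c kf) : ℝ))).card
        c hc hinj kf hOnt le_rfl
    -- facts about c1
    have hfin1 : ∀ j : Fin n, k + 1 ≤ j.1 → c1 j = G.dpr (d 0) (xi n j) := by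
      intro j hj
      rcases hmoves j with h | ⟨_, hOnj, _⟩
      · rw [h]; exact hfin j hj
      · exfalso
        have hOn0 : OnP d 0 (c j) := ⟨xi n j, xi_pos j, xi_lt j, hfin j hj⟩
        exact not_onP_of_onP hd ht0 hOn0 hOnj
    have hlow1 : ∀ j : Fin n, j.1 < k → Pk d (c1 j) ∧ ¬ OnP d 0 (c1 j) := by
      intro j hj
      rcases hmoves j with h | ⟨_, _, hOn''⟩
      · rw [h]; exact hlow j (by omega)
      · exact ⟨⟨t'', hOn''⟩, not_onP_of_onP hd (Ne.symm ht''0) hOn''⟩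
    have hOnt1 : OnP d t (c1 kf) := by rw [hc1k]; exact hOnt
    obtain ⟨he1, ha0, ha2, hceq⟩ := onP_dpm (G := G) hOnt1
    -- cross the token kf onto the main prong at its canonical slot
    have hf1 : ∀ j, j ≠ kf → ∀ x : unitInterval,
        (x:ℝ) ≤ ((G.dpm (d t) (c1 kf)):ℝ) → c1 j ≠ G.dpr (d t) x := by
      intro j hj x hx hEq
      have hint := hc1 j
      rw [hEq] at hint
      obtain ⟨hx0, hx1⟩ := dpr_int (G := G) hint.1 hint.2
      by_cases hhalf : (x:ℝ) < 1/2
      · have hOnj : OnP d t (c1 j) := ⟨x, hx0, hhalf, hEq⟩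
        have := hmin j hOnj
        have hxe : (G.dpm (d t) (c1 j) : ℝ) = (x:ℝ) := by rw [hEq, dpm_dpr]
        have hcc : c1 j = c1 kf := by
          rw [hEq, hceq]
          congr 1
          apply Subtype.ext
          rw [hxe] at this
          show (_ : ℝ) = _
          linarith
        exact hj (hinj1 (by rw [cR, cR, hcc]))
      · push_neg at hhalf
        linarith
    have hf2 : ∀ j, j ≠ kf → ∀ x : unitInterval,
        (x:ℝ) ≤ ((xi n kf):ℝ) → c1 j ≠ G.dpr (d 0) x := by
      intro j hj x hx hEq
      have hint := hc1 j
      rw [hEq] at hint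
      obtain ⟨hx0, hx1⟩ := dpr_int (G := G) hint.1 hint.2
      have hxhalf : (x:ℝ) < 1/2 := lt_of_le_of_lt hx (xi_lt kf)
      have hOn0 : OnP d 0 (c1 j) := ⟨x, hx0, hxhalf, hEq⟩
      rcases lt_trichotomy j.1 k with hlt | heq | hgt
      · exact (hlow1 j hlt).2 hOn0
      · exact hj (Fin.ext heq)
      · have hjfin := hfin1 j (by omega)
        have hxx : x = xi n j := by
          have h7 := hjfin.symm.trans hEq
          have h8 := congrArg (G.dpm (d 0)) h7
          rw [dpm_dpr, dpm_dpr] at h8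
          exact h8.symm
        rw [hxx] at hx
        have h9 := xi_le_iff.mp hx
        simp only [hkf] at h9
        omega
    obtain ⟨hinj2, hint2, hjoin2⟩ := ccross hc1 hinj1 kf (d t) (d 0) (hdv t) _ (xi n kf)
      hceq (xi_pos kf) (lt_trans (xi_lt kf) (by norm_num)) hf1 hf2
    set c2 := Function.update c1 kf (G.dpr (d 0) (xi n kf)) with hc2
    have hfin2 : ∀ j : Fin n, k ≤ j.1 → c2 j = G.dpr (d 0) (xi n j) := by
      intro j hj
      by_cases hjk : j = kf
      · subst hjk
        rw [hc2, Function.update_self]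
      · rw [hc2, Function.update_of_ne hjk]
        apply hfin1
        rcases Nat.lt_or_ge j.1 (k+1) with h | h
        · refine absurd (Fin.ext ?_) hjk
          show j.1 = kf.1
          simp only [hkf]
          omega
        · exact h
    have hlow2 : ∀ j : Fin n, j.1 < k → Pk d (c2 j) ∧ ¬ OnP d 0 (c2 j) := by
      intro j hj
      have hjk : j ≠ kf := fun h => by rw [h] at hj; simp [hkf] at hj
      rw [hc2, Function.update_of_ne hjk]
      exact hlow1 j hj
    have := ih (by omega) c2 hint2 hinj2 hfin2 hlow2
    exact (hjoin1.trans hjoin2).trans this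

end FinGraph
namespace FinGraph

open unitInterval Set

variable {G : FinGraph} {n : ℕ}

variable (v : G.V) [ConnectedSpace G.Space]

open Classical in
/-- Move every point of a configuration into the interior of an edge. -/
lemma clear_vertices (hv : 3 ≤ G.degree v) :
    ∀ (K : ℕ) (z : Conf G.Space n),
      (Finset.univ.filter (fun j => ∃ w, z.1 j = G.vtx w)).card ≤ K →
      ∃ (c : Fin n → G.E × unitInterval) (hc : IntCfg c)
        (hinj : Function.Injective (G.cR c)), Joined z ⟨G.cR c, hinj⟩ := by
  classical
  intro K
  induction K with
  | zero =>
    intro z hcard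
    have hnov : ∀ j, ¬ ∃ w, z.1 j = G.vtx w := by
      intro j hj
      have hmem : j ∈ Finset.univ.filter (fun j => ∃ w, z.1 j = G.vtx w) := by
        simp only [Finset.mem_filter, Finset.mem_univ, true_and]; exact hj
      have := Finset.card_pos.mpr ⟨j, hmem⟩
      omega
    have hj : ∀ j, ∃ p : G.E × unitInterval,
        0 < (p.2:ℝ) ∧ (p.2:ℝ) < 1 ∧ z.1 j = G.edgePt p.1 p.2 := by
      intro j
      rcases space_cases (z.1 j) with ⟨w, hw⟩ | ⟨e, x, h0, h1, hx⟩
      · exact absurd ⟨w, hw⟩ (hnov j)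
      · refine ⟨(e, x), ?_, ?_, hx⟩
        · rcases lt_or_eq_of_le x.2.1 with h | h
          · exact h
          · exact absurd (Subtype.ext h.symm) h0
        · rcases lt_or_eq_of_le x.2.2 with h | h
          · exact h
          · exact absurd (Subtype.ext h) h1
    choose c hc1 hc2 hz using hj
    have hzc : z.1 = G.cR c := funext hz
    have hinj : Function.Injective (G.cR c) := hzc ▸ z.2
    exact ⟨c, fun j => ⟨hc1 j, hc2 j⟩, hinj, (Subtype.ext hzc :
      z = ⟨G.cR c, hinj⟩) ▸ Joined.refl z⟩
  | succ K ih =>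
    intro z hcard
    by_cases hemp : (Finset.univ.filter (fun j => ∃ w, z.1 j = G.vtx w)) = ∅
    · apply ih
      rw [hemp]
      simp
    · obtain ⟨j₀, hj₀⟩ := Finset.nonempty_iff_ne_empty.mpr hemp
      simp only [Finset.mem_filter, Finset.mem_univ, true_and] at hj₀
      obtain ⟨w, hw⟩ := hj₀
      obtain ⟨dd, hdd⟩ := G.exists_end v hv w
      -- obstacle parameters along the edge-end dd
      set ρ : Fin n → ℝ := fun j =>
        match G.nfQ (z.1 j) with
        | Sum.inl p => if p.1 = dd.1 then (G.dpm dd p : ℝ) else 1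
        | Sum.inr _ => 1 with hρ
      have hρkey : ∀ j (x : unitInterval), 0 < (x:ℝ) → (x:ℝ) < 1 →
          z.1 j = G.dpt dd x → ρ j = (x:ℝ) := by
        intro j x hx0 hx1 hzj
        have hint : ((G.dpr dd x).2 : ℝ) = if dd.2 then 1 - (x:ℝ) else (x:ℝ) :=
          dpr_param dd x
        have h0 : (G.dpr dd x).2 ≠ 0 := by
          intro h
          rw [h] at hint
          simp at hint
          split_ifs at hint <;> linarith
        have h1 : (G.dpr dd x).2 ≠ 1 := by
          intro h
          rw [h] at hint
          simp at hint
          split_ifs at hint <;> linarith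
        have : G.nfQ (z.1 j) = Sum.inl (G.dpr dd x) := by
          rw [hzj, dpt]
          exact nfQ_edgePt _ _ h0 h1
        rw [hρ]
        simp only [this]
        have hrfl : (G.dpr dd x).1 = dd.1 := rfl
        rw [if_pos hrfl, dpm_dpr]
      obtain ⟨ε, hε0, hε2, hεlt⟩ := exists_below
        ((Finset.univ : Finset (Fin n)).image ρ) (1/2) (by norm_num)
      set εI : unitInterval := ⟨ε, le_of_lt hε0, by linarith⟩ with hεI
      have hfree : ∀ j, j ≠ j₀ → ∀ x : unitInterval,
          (x:ℝ) ∈ Set.uIcc ((0 : unitInterval):ℝ) ((εI:ℝ)) → z.1 j ≠ G.dpt dd x := by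
        intro j hj x hx hEq
        have hxε : (x:ℝ) ≤ ε := by
          rcases Set.mem_uIcc.mp hx with ⟨h1, h2⟩ | ⟨h1, h2⟩
          · exact h2
          · norm_num at h2
            linarith [hε0]
        rcases lt_or_eq_of_le x.2.1 with hx0 | hx0
        · have hρj := hρkey j x hx0 (by linarith) hEq
          have := hεlt (ρ j) (Finset.mem_image_of_mem _ (Finset.mem_univ j))
            (by rw [hρj]; exact hx0)
          rw [hρj] at this
          linarith
        · have hx00 : x = 0 := Subtype.ext hx0.symm
          rw [hx00, dpt_zero, hdd, ← hw] at hEq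
          exact hj (z.2 hEq)
      obtain ⟨w1, hw1, hjoin1⟩ := dslide z j₀ dd 0 εI
        (by rw [hw, ← hdd, ← dpt_zero]) hfree
      have hsub : (Finset.univ.filter (fun j => ∃ u, w1.1 j = G.vtx u)) ⊆
          (Finset.univ.filter (fun j => ∃ u, z.1 j = G.vtx u)).erase j₀ := by
        intro j hj
        simp only [Finset.mem_filter, Finset.mem_univ, true_and] at hj
        obtain ⟨u, hu⟩ := hj
        have hjj₀ : j ≠ j₀ := by
          intro h
          subst h
          rw [hw1, Function.update_self] at hu
          have hint : ((G.dpr dd εI).2 : ℝ) = if dd.2 then 1 - ε else ε := dpr_param dd εI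
          have h0 : (G.dpr dd εI).2 ≠ 0 := by
            intro h
            rw [h] at hint
            simp at hint
            split_ifs at hint <;> linarith
          have h1 : (G.dpr dd εI).2 ≠ 1 := by
            intro h
            rw [h] at hint
            simp at hint
            split_ifs at hint <;> linarith
          exact edgePt_ne_vtx _ _ h0 h1 u hu
        rw [Finset.mem_erase]
        refine ⟨hjj₀, ?_⟩
        simp only [Finset.mem_filter, Finset.mem_univ, true_and]
        rw [hw1, Function.update_of_ne hjj₀] at hu
        exact ⟨u, hu⟩
      have hj₀mem : j₀ ∈ (Finset.univ.filter (fun j => ∃ u, z.1 j = G.vtx u)) := by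
        simp only [Finset.mem_filter, Finset.mem_univ, true_and]
        exact ⟨w, hw⟩
      have hcard1 : (Finset.univ.filter (fun j => ∃ u, w1.1 j = G.vtx u)).card ≤ K := by
        have h1 := Finset.card_le_card hsub
        have h2 := Finset.card_erase_lt_of_mem hj₀mem
        omega
      obtain ⟨c, hc, hinj, hjoin2⟩ := ih w1 hcard1
      exact ⟨c, hc, hinj, hjoin1.trans hjoin2⟩

end FinGraph

/-- If `Γ` is a connected finite graph having at least one essential vertex (a vertex
incident to at least 3 edges), then the configuration space `F(Γ, n)` of `n` distinct
ordered points on `Γ` is connected, for every `n`. -/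
theorem conf_graph_connected (G : FinGraph) [ConnectedSpace G.Space]
    (v : G.V) (hv : 3 ≤ G.degree v) (n : ℕ) :
    ConnectedSpace (Conf G.Space n) := by

  classical
  obtain ⟨d, hd, hdv⟩ := FinGraph.exists_triple hv
  have hdv' : ∀ t, G.endV (d t) = G.endV (d 0) := fun t => (hdv t).trans (hdv 0).symm
  set Zs : Conf G.Space n := ⟨G.cR (FinGraph.cstar d), FinGraph.cstar_inj d⟩ with hZs
  have key : ∀ z : Conf G.Space n, Joined z Zs := by
    intro z
    obtain ⟨c, hc, hinj, hjoin0⟩ := FinGraph.clear_vertices v hv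
      (Finset.univ.filter (fun j => ∃ w, z.1 j = G.vtx w)).card z le_rfl
    obtain ⟨c2, hc2, hall2, hinj2, hjoin1⟩ := FinGraph.phase1 v hd hdv
      (FinGraph.phi v d c) c hc hinj le_rfl
    obtain ⟨t₀, ht₀⟩ := FinGraph.exists_avoid (G := G) hd (d 0).1
    obtain ⟨c3, hc3, hclear, hpres, hinj3, hjoin2⟩ := FinGraph.clear_edge hd hdv' (d 0).1 t₀
      ht₀ (Finset.univ.filter (fun j => ∃ t, (d t).1 = (d 0).1 ∧
        FinGraph.OnP d t (c2 j))).card c2 hc2 hinj2 le_rfl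
    have hall3 : ∀ j, FinGraph.Pk d (c3 j) := by
      intro j
      rcases hpres j with h | ⟨_, hOn⟩
      · rw [h]; exact hall2 j
      · exact ⟨t₀, hOn⟩
    have hjoin3 := FinGraph.phase2 hd hdv' n le_rfl c3 hc3 hinj3
      (fun j hj => absurd j.2 (by omega))
      (fun j _ => ⟨hall3 j, hclear j 0 rfl⟩)
    exact ((hjoin0.trans hjoin1).trans hjoin2).trans hjoin3
  have : PathConnectedSpace (Conf G.Space n) :=
    ⟨⟨Zs⟩, fun x y => (key x).trans (key y).symm⟩
  exact PathConnectedSpace.connectedSpace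
end
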